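/- arXiv:2106.03166 — 6 statements merged into one kernel-verified Lean document; each statement's English description precedes it below -/
import Mathlib

section
/- Let N ≥ 2 be an integer, let λ ∈ [0, ((N−1)/2)²], and set γ = √((N−1)² − 4λ) and h = (γ+1)/2. Then for every test function u, (∫₀^∞ ((u''(r) + (N−1)·coth(r)·u'(r))² − λ·u'(r)²)·(sinh r)^{N−1} dr) · (∫₀^∞ r²·u'(r)²·(sinh r)^{N−1} dr) ≥ h²·(∫₀^∞ u'(r)²·(sinh r)^{N−1} dr)². -/
open Real MeasureTheory Set

private lemma my_cs {μ : Measure ℝ} {f g : ℝ → ℝ}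
    (hf2 : Integrable (fun x => f x ^ 2) μ) (hg2 : Integrable (fun x => g x ^ 2) μ)
    (hfg : Integrable (fun x => f x * g x) μ) :
    (∫ x, f x * g x ∂μ) ^ 2 ≤ (∫ x, f x ^ 2 ∂μ) * ∫ x, g x ^ 2 ∂μ := by
  have key : ∀ t : ℝ, 0 ≤ (∫ x, f x ^ 2 ∂μ) * (t * t) + (2 * ∫ x, f x * g x ∂μ) * t
      + ∫ x, g x ^ 2 ∂μ := by
    intro t
    have h1 : 0 ≤ ∫ x, (t * f x + g x) ^ 2 ∂μ := integral_nonneg fun x => sq_nonneg _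
    have h2 : ∫ x, (t * f x + g x) ^ 2 ∂μ
        = (∫ x, f x ^ 2 ∂μ) * (t * t) + (2 * ∫ x, f x * g x ∂μ) * t + ∫ x, g x ^ 2 ∂μ := by
      have e : (fun x => (t * f x + g x) ^ 2)
          = fun x => t * t * f x ^ 2 + 2 * t * (f x * g x) + g x ^ 2 := by
        funext x; ring
      have i0 : Integrable (fun x => t * t * f x ^ 2) μ := hf2.const_mul (t*t)
      have i1 : Integrable (fun x => 2 * t * (f x * g x)) μ := hfg.const_mul (2*t)
      have i2 : Integrable (fun x => t * t * f x ^ 2 + 2 * t * (f x * g x)) μ := i0.add i1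
      rw [e, integral_add i2 hg2, integral_add i0 i1, MeasureTheory.integral_const_mul,
        MeasureTheory.integral_const_mul]
      ring
    linarith [h2 ▸ h1]
  have hd := discrim_le_zero key
  rw [discrim] at hd
  nlinarith [hd]

private lemma glue_cont {f : ℝ → ℝ} {ε : ℝ} (hε : 0 < ε) (h0 : ∀ r < ε, f r = 0)
    (hf : ContinuousOn f (Set.Ioi 0)) : Continuous f := by
  rw [continuous_iff_continuousAt]
  intro x
  rcases lt_or_ge x ε with hx | hx
  · have hev : f =ᶠ[nhds x] fun _ => 0 := by
      filter_upwards [Iio_mem_nhds hx] with y hy using h0 y hy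
    exact continuousAt_const.congr hev.symm
  · exact hf.continuousAt (Ioi_mem_nhds (lt_of_lt_of_le hε hx))

private lemma glue_contDiff {f : ℝ → ℝ} {ε : ℝ} (hε : 0 < ε) (h0 : ∀ r < ε, f r = 0)
    (hf : ContDiffOn ℝ 1 f (Set.Ioi 0)) : ContDiff ℝ 1 f := by
  rw [contDiff_iff_contDiffAt]
  intro x
  rcases lt_or_ge x ε with hx | hx
  · have hev : f =ᶠ[nhds x] fun _ => (0:ℝ) := by
      filter_upwards [Iio_mem_nhds hx] with y hy using h0 y hy
    exact (contDiffAt_const (c := (0:ℝ))).congr_of_eventuallyEq hev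
  · exact hf.contDiffAt (Ioi_mem_nhds (lt_of_lt_of_le hε hx))

private lemma alg_id (n γ lam α β s c v p X Y : ℝ) (hs : s ≠ 0)
    (hc : c ^ 2 = s ^ 2 + 1) (hγ2 : γ ^ 2 = n ^ 2 - 4 * lam)
    (hα : α = (γ - n)/2) (hβ : β = (γ + n)/2) :
    ((p + n * (c / s) * v) ^ 2 - lam * v ^ 2) * (Y * (X * X))
      = (p * X + v * (-α * (X / s) * c)) ^ 2 * Y
        + β * (1 - α) * ((v * X) ^ 2 / s ^ 2 * Y)
        + (β * ((s * s - c * c) / s ^ 2) * (v * X) ^ 2 * Y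
           + β * (c / s) * (2 * (v * X) * (p * X + v * (-α * (X / s) * c))) * Y
           + β * (c / s) * (v * X) ^ 2 * (γ * (Y / s) * c)) := by
  subst hα hβ
  have hlam : lam = (n ^ 2 - γ ^ 2) / 4 := by linarith
  subst hlam
  field_simp
  ring_nf
  linear_combination (4 * v^2 * X^2 * Y * (n^2 + 2*n + 2*γ - γ^2)) * hc

private lemma sinh_conv {t r : ℝ} (hr : 0 < r) (ht0 : 0 ≤ t) (htr : t ≤ r) :
    Real.sinh t ≤ t / r * Real.sinh r := by
  have hconv : ConvexOn ℝ (Set.Icc (0:ℝ) r) Real.sinh := by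
    apply convexOn_of_deriv2_nonneg' (convex_Icc 0 r)
      Real.differentiable_sinh.differentiableOn
    · rw [Real.deriv_sinh]; exact Real.differentiable_cosh.differentiableOn
    · intro x hx
      have : deriv^[2] Real.sinh x = Real.sinh x := by
        simp [Function.iterate_succ, Real.deriv_sinh, Real.deriv_cosh]
      rw [this]
      exact Real.sinh_nonneg_iff.mpr hx.1
  have h1 : (1 - t/r) • (0:ℝ) + (t/r) • r = t := by
    rw [smul_eq_mul, smul_eq_mul]
    field_simp
    ring
  have htr' : t / r ≤ 1 := (div_le_one hr).mpr htr
  have h2 := hconv.2 (left_mem_Icc.mpr hr.le) (right_mem_Icc.mpr hr.le)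
    (by linarith : (0:ℝ) ≤ 1 - t/r) (by positivity : (0:ℝ) ≤ t/r) (by ring)
  rw [h1] at h2
  simpa using h2

private lemma S_le {r γ : ℝ} (hr : 0 < r) (hγ0 : 0 ≤ γ) :
    (∫ t in (0:ℝ)..r, Real.sinh t ^ γ) ≤ r / (γ + 1) * Real.sinh r ^ γ := by
  have hWc : Continuous (fun t : ℝ => Real.sinh t ^ γ) :=
    Real.continuous_sinh.rpow_const (fun x => Or.inr hγ0)
  have hgc : Continuous (fun t : ℝ => (t/r) ^ γ * Real.sinh r ^ γ) :=
    ((continuous_id.div_const r).rpow_const (fun x => Or.inr hγ0)).mul continuous_const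
  have hmono : (∫ t in (0:ℝ)..r, Real.sinh t ^ γ)
      ≤ ∫ t in (0:ℝ)..r, (t/r) ^ γ * Real.sinh r ^ γ := by
    apply intervalIntegral.integral_mono_on hr.le (hWc.intervalIntegrable _ _)
      (hgc.intervalIntegrable _ _)
    intro t ht
    calc Real.sinh t ^ γ ≤ (t/r * Real.sinh r) ^ γ := by
          apply Real.rpow_le_rpow (Real.sinh_nonneg_iff.mpr ht.1) (sinh_conv hr ht.1 ht.2) hγ0
      _ = (t/r) ^ γ * Real.sinh r ^ γ :=
          Real.mul_rpow (div_nonneg ht.1 hr.le) (Real.sinh_nonneg_iff.mpr hr.le)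
  have hval : (∫ t in (0:ℝ)..r, (t/r) ^ γ * Real.sinh r ^ γ)
      = r / (γ + 1) * Real.sinh r ^ γ := by
    rw [intervalIntegral.integral_mul_const]
    have he : Set.EqOn (fun t : ℝ => (t/r) ^ γ) (fun t : ℝ => t ^ γ / r ^ γ) (Set.uIcc 0 r) := by
      intro t ht
      rw [Set.uIcc_of_le hr.le] at ht
      exact Real.div_rpow ht.1 hr.le γ
    rw [intervalIntegral.integral_congr he]
    rw [intervalIntegral.integral_div, integral_rpow (Or.inl (by linarith : (-1:ℝ) < γ))]
    rw [Real.zero_rpow (by linarith : γ + 1 ≠ 0), Real.rpow_add hr γ 1, Real.rpow_one]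
    have h1 : (0:ℝ) < γ + 1 := by linarith
    have h2 : r ^ γ ≠ 0 := (Real.rpow_pos_of_pos hr γ).ne'
    field_simp
    ring
  linarith

set_option maxHeartbeats 2000000 in
/-- **Second-order Heisenberg-Pauli-Weyl uncertainty principle, radial form**
(Theorem 2.7 of Berchio-Ganguly-Roychowdhury). -/
theorem stmt_7 (N : ℕ) (hN : 2 ≤ N) (lam : ℝ)
    (hlam : lam ∈ Set.Icc (0 : ℝ) ((((N : ℝ) - 1) / 2) ^ 2))
    (γ h : ℝ) (hγ : γ = Real.sqrt (((N : ℝ) - 1) ^ 2 - 4 * lam))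
    (hh : h = (γ + 1) / 2)
    (u : ℝ → ℝ) (hu : ContDiff ℝ (⊤ : ℕ∞) u) (hcs : HasCompactSupport u)
    (hsupp : tsupport u ⊆ Set.Ioi 0) :
    (∫ r in Set.Ioi (0 : ℝ),
        ((deriv (deriv u) r + ((N : ℝ) - 1) * (Real.cosh r / Real.sinh r) * deriv u r) ^ 2
          - lam * (deriv u r) ^ 2) * Real.sinh r ^ ((N : ℝ) - 1))
      * (∫ r in Set.Ioi (0 : ℝ), r ^ 2 * (deriv u r) ^ 2 * Real.sinh r ^ ((N : ℝ) - 1))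
    ≥ h ^ 2 * (∫ r in Set.Ioi (0 : ℝ), (deriv u r) ^ 2 * Real.sinh r ^ ((N : ℝ) - 1)) ^ 2 := by
  obtain ⟨hlam0, hlam1⟩ := hlam
  have hN2 : (2:ℝ) ≤ (N:ℝ) := by exact_mod_cast hN
  set n : ℝ := (N : ℝ) - 1 with hn
  have hn1 : 1 ≤ n := by simp only [hn]; linarith
  have hγ0 : 0 ≤ γ := by rw [hγ]; exact Real.sqrt_nonneg _
  have hsq : 0 ≤ n ^ 2 - 4 * lam := by
    have h1 : lam ≤ (n/2)^2 := hlam1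
    nlinarith
  have hγ2 : γ ^ 2 = n ^ 2 - 4 * lam := by rw [hγ]; exact Real.sq_sqrt hsq
  have hγn : γ ≤ n := by nlinarith
  have hγ1 : (0:ℝ) < γ + 1 := by linarith
  set α : ℝ := (γ - n) / 2 with hα
  set β : ℝ := (γ + n) / 2 with hβ
  have hα0 : α ≤ 0 := by rw [hα]; linarith
  have hβ0 : 0 ≤ β := by rw [hβ]; linarith
  set v : ℝ → ℝ := deriv u with hvdef
  have huI : ContDiff ℝ ((⊤:ℕ∞) : WithTop ℕ∞) u := hu.of_le (by simp)
  have hvCD : ContDiff ℝ ((⊤:ℕ∞) : WithTop ℕ∞) v := (contDiff_infty_iff_deriv.mp huI).2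
  have hvc : Continuous v := hvCD.continuous
  have hdvc : Continuous (deriv v) := (contDiff_infty_iff_deriv.mp hvCD).2.continuous
  have hv1 : ContDiff ℝ 1 v := hvCD.of_le (by exact_mod_cast le_top)
  have hvd : ∀ r : ℝ, HasDerivAt v (deriv v r) r := fun r =>
    ((hvCD.differentiable (by simp)) r).hasDerivAt
  obtain ⟨ε, hε0, hεc⟩ : ∃ ε : ℝ, 0 < ε ∧ Set.Iio ε ⊆ (tsupport u)ᶜ := by
    have hKc : IsCompact (insert (1:ℝ) (tsupport u)) := hcs.insert 1
    have hKpos : insert (1:ℝ) (tsupport u) ⊆ Set.Ioi 0 :=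
      Set.insert_subset (by norm_num) hsupp
    have hmem := hKc.sInf_mem (Set.insert_nonempty _ _)
    refine ⟨sInf (insert (1:ℝ) (tsupport u)), hKpos hmem, fun r hr hrK => ?_⟩
    exact absurd (csInf_le hKc.bddBelow (Set.mem_insert_of_mem _ hrK)) (not_le.mpr hr)
  have hv0 : ∀ r ∉ tsupport u, v r = 0 := fun r hr => by
    rw [hvdef, (notMem_tsupport_iff_eventuallyEq.mp hr).deriv_eq]; exact deriv_const r 0
  have hvev : ∀ r ∉ tsupport u, v =ᶠ[nhds r] (fun _ => 0) := fun r hr => by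
    filter_upwards [(isClosed_tsupport u).isOpen_compl.mem_nhds hr] with y hy using hv0 y hy
  have hdv0 : ∀ r ∉ tsupport u, deriv v r = 0 := fun r hr => by
    rw [(hvev r hr).deriv_eq]; exact deriv_const r 0
  have h0ns : (0:ℝ) ∉ tsupport u := fun hmem => lt_irrefl 0 (Set.mem_Ioi.mp (hsupp hmem))
  have hspos : ∀ r ∈ Set.Ioi (0:ℝ), 0 < Real.sinh r := fun r hr =>
    Real.sinh_pos_iff.mpr hr
  have hsne : ∀ r ∈ Set.Ioi (0:ℝ), Real.sinh r ≠ 0 := fun r hr => (hspos r hr).ne'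
  -- functions
  set φ : ℝ → ℝ := fun r => v r * Real.sinh r ^ (-α) with hφdef
  set Dφ : ℝ → ℝ := fun r => deriv v r * Real.sinh r ^ (-α)
      + v r * (-α * (Real.sinh r ^ (-α) / Real.sinh r) * Real.cosh r) with hDφdef
  set S : ℝ → ℝ := fun r => ∫ t in (0:ℝ)..r, Real.sinh t ^ γ with hSdef
  have hφ0 : ∀ r ∉ tsupport u, φ r = 0 := fun r hr => by
    simp only [hφdef]; rw [hv0 r hr]; ring
  have hDφ0 : ∀ r ∉ tsupport u, Dφ r = 0 := fun r hr => by
    simp only [hDφdef]; rw [hv0 r hr, hdv0 r hr]; ring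
  -- derivative helpers
  have hsinhD : ∀ (c : ℝ) (r : ℝ), 0 < r →
      HasDerivAt (fun x => Real.sinh x ^ c) (c * Real.sinh r ^ (c-1) * Real.cosh r) r := by
    intro c r hr
    have h1 := (Real.hasDerivAt_rpow_const (x := Real.sinh r) (p := c)
      (Or.inl (hspos r hr).ne'))
    exact (h1.comp r (Real.hasDerivAt_sinh r)).congr_deriv (by ring)
  have hrpow_sub : ∀ (c : ℝ) (r : ℝ), 0 < r →
      Real.sinh r ^ (c - 1) = Real.sinh r ^ c / Real.sinh r := by
    intro c r hr
    rw [Real.rpow_sub (hspos r hr), Real.rpow_one]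
  have hφD : ∀ r ∈ Set.Ioi (0:ℝ), HasDerivAt φ (Dφ r) r := by
    intro r hr
    have h1 := (hvd r).mul (hsinhD (-α) r hr)
    rw [hφdef]
    refine h1.congr_deriv ?_
    simp only [hDφdef]
    rw [hrpow_sub (-α) r hr]
  -- S facts
  have hWc : Continuous (fun t : ℝ => Real.sinh t ^ γ) :=
    Real.continuous_sinh.rpow_const (fun x => Or.inr hγ0)
  have hSD : ∀ r : ℝ, HasDerivAt S (Real.sinh r ^ γ) r := fun r => by
    rw [hSdef]
    exact intervalIntegral.integral_hasDerivAt_right (hWc.intervalIntegrable _ _)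
      (hWc.stronglyMeasurableAtFilter _ _) hWc.continuousAt
  have hScont : Continuous S := continuous_iff_continuousAt.mpr fun r => (hSD r).continuousAt
  have hSCD : ContDiff ℝ 1 S := by
    rw [contDiff_one_iff_deriv]
    refine ⟨fun r => (hSD r).differentiableAt, ?_⟩
    have hde : deriv S = fun r => Real.sinh r ^ γ := funext fun r => (hSD r).deriv
    rw [hde]; exact hWc
  have hS0 : S 0 = 0 := by rw [hSdef]; exact intervalIntegral.integral_same
  have hSnn : ∀ r ∈ Set.Ioi (0:ℝ), 0 ≤ S r := fun r hr => by
    rw [hSdef]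
    exact intervalIntegral.integral_nonneg (le_of_lt hr)
      (fun t ht => Real.rpow_nonneg (Real.sinh_nonneg_iff.mpr ht.1) γ)
  have hSle : ∀ r ∈ Set.Ioi (0:ℝ), S r ≤ r / (γ+1) * Real.sinh r ^ γ := fun r hr => by
    rw [hSdef]; exact S_le hr hγ0
  -- continuity on Ioi 0
  have hRPc : ∀ c : ℝ, ContinuousOn (fun x => Real.sinh x ^ c) (Set.Ioi 0) := fun c =>
    Real.continuous_sinh.continuousOn.rpow_const (fun r hr => Or.inl (hsne r hr))
  have hcothc : ContinuousOn (fun x => Real.cosh x / Real.sinh x) (Set.Ioi 0) :=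
    Real.continuous_cosh.continuousOn.div Real.continuous_sinh.continuousOn hsne
  have hφc : ContinuousOn φ (Set.Ioi 0) := by
    rw [hφdef]; exact hvc.continuousOn.mul (hRPc (-α))
  have hDφc : ContinuousOn Dφ (Set.Ioi 0) := by
    rw [hDφdef]
    exact (hdvc.continuousOn.mul (hRPc (-α))).add
      (hvc.continuousOn.mul ((continuousOn_const.mul ((hRPc (-α)).div
        Real.continuous_sinh.continuousOn hsne)).mul Real.continuous_cosh.continuousOn))
  -- integrability builder
  have mkInt : ∀ g : ℝ → ℝ, (∀ r ∉ tsupport u, g r = 0) → ContinuousOn g (Set.Ioi 0) →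
      IntegrableOn g (Set.Ioi 0) volume := by
    intro g hg0 hgc
    have hcont : Continuous g := glue_cont hε0 (fun r hr => hg0 r (hεc (Set.mem_Iio.mpr hr))) hgc
    have hgs : HasCompactSupport g := HasCompactSupport.intro hcs (fun x hx => hg0 x hx)
    exact (hcont.integrable_of_hasCompactSupport hgs).integrableOn
  -- integrand functions
  set g1 : ℝ → ℝ := fun r => ((deriv v r + n * (Real.cosh r / Real.sinh r) * v r) ^ 2
      - lam * v r ^ 2) * Real.sinh r ^ n with hg1def
  set g2 : ℝ → ℝ := fun r => Dφ r ^ 2 * Real.sinh r ^ γ with hg2def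
  set g3 : ℝ → ℝ := fun r => β * (1 - α) * (φ r ^ 2 / Real.sinh r ^ 2 * Real.sinh r ^ γ)
    with hg3def
  set DF : ℝ → ℝ := fun r =>
      β * ((Real.sinh r * Real.sinh r - Real.cosh r * Real.cosh r) / Real.sinh r ^ 2) * φ r ^ 2
        * Real.sinh r ^ γ
      + β * (Real.cosh r / Real.sinh r) * (2 * φ r * Dφ r) * Real.sinh r ^ γ
      + β * (Real.cosh r / Real.sinh r) * φ r ^ 2
        * (γ * (Real.sinh r ^ γ / Real.sinh r) * Real.cosh r) with hDFdef
  set g5 : ℝ → ℝ := fun r => v r ^ 2 * Real.sinh r ^ n with hg5def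
  set g6 : ℝ → ℝ := fun r => r ^ 2 * v r ^ 2 * Real.sinh r ^ n with hg6def
  set g7 : ℝ → ℝ := fun r => φ r * Dφ r * S r with hg7def
  set DF2 : ℝ → ℝ := fun r => 2 * φ r * Dφ r * S r + φ r ^ 2 * Real.sinh r ^ γ with hDF2def
  set g8 : ℝ → ℝ := fun r => |Dφ r| * (r * |φ r|) * Real.sinh r ^ γ with hg8def
  set f1 : ℝ → ℝ := fun r => |Dφ r| * Real.sinh r ^ (γ/2) with hf1def
  set f2 : ℝ → ℝ := fun r => r * |φ r| * Real.sinh r ^ (γ/2) with hf2def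
  -- integrability
  have hg1i : IntegrableOn g1 (Set.Ioi 0) volume := by
    apply mkInt
    · intro r hr; simp only [hg1def]; rw [hv0 r hr, hdv0 r hr]; ring
    · exact (((hdvc.continuousOn.add ((continuousOn_const.mul hcothc).mul hvc.continuousOn)).pow 2).sub
        (continuousOn_const.mul (hvc.continuousOn.pow 2))).mul (hRPc n)
  have hg2i : IntegrableOn g2 (Set.Ioi 0) volume := by
    apply mkInt
    · intro r hr; simp only [hg2def]; rw [hDφ0 r hr]; ring
    · exact (hDφc.pow 2).mul (hRPc γ)
  have hg3i : IntegrableOn g3 (Set.Ioi 0) volume := by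
    apply mkInt
    · intro r hr; simp only [hg3def]; rw [hφ0 r hr]; ring
    · exact continuousOn_const.mul (((hφc.pow 2).div
        (Real.continuous_sinh.continuousOn.pow 2)
        (fun r hr => pow_ne_zero 2 (hsne r hr))).mul (hRPc γ))
  have hDFi : IntegrableOn DF (Set.Ioi 0) volume := by
    apply mkInt
    · intro r hr; simp only [hDFdef]; rw [hφ0 r hr, hDφ0 r hr]; ring
    · apply ContinuousOn.add
      apply ContinuousOn.add
      · exact ((continuousOn_const.mul (((Real.continuous_sinh.continuousOn.mul
          Real.continuous_sinh.continuousOn).sub (Real.continuous_cosh.continuousOn.mul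
          Real.continuous_cosh.continuousOn)).div (Real.continuous_sinh.continuousOn.pow 2)
          (fun r hr => pow_ne_zero 2 (hsne r hr)))).mul (hφc.pow 2)).mul (hRPc γ)
      · exact ((continuousOn_const.mul hcothc).mul ((continuousOn_const.mul hφc).mul
          hDφc)).mul (hRPc γ)
      · exact ((continuousOn_const.mul hcothc).mul (hφc.pow 2)).mul
          ((continuousOn_const.mul ((hRPc γ).div Real.continuous_sinh.continuousOn hsne)).mul
            Real.continuous_cosh.continuousOn)
  have hg5i : IntegrableOn g5 (Set.Ioi 0) volume := by
    apply mkInt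
    · intro r hr; simp only [hg5def]; rw [hv0 r hr]; ring
    · exact (hvc.continuousOn.pow 2).mul (hRPc n)
  have hg6i : IntegrableOn g6 (Set.Ioi 0) volume := by
    apply mkInt
    · intro r hr; simp only [hg6def]; rw [hv0 r hr]; ring
    · exact ((continuousOn_pow 2).mul (hvc.continuousOn.pow 2)).mul (hRPc n)
  have hg7i : IntegrableOn g7 (Set.Ioi 0) volume := by
    apply mkInt
    · intro r hr; simp only [hg7def]; rw [hφ0 r hr]; ring
    · exact (hφc.mul hDφc).mul hScont.continuousOn
  have hDF2i : IntegrableOn DF2 (Set.Ioi 0) volume := by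
    apply mkInt
    · intro r hr; simp only [hDF2def]; rw [hφ0 r hr, hDφ0 r hr]; ring
    · exact (((continuousOn_const.mul hφc).mul hDφc).mul hScont.continuousOn).add
        ((hφc.pow 2).mul (hRPc γ))
  have hg8i : IntegrableOn g8 (Set.Ioi 0) volume := by
    apply mkInt
    · intro r hr; simp only [hg8def]; rw [hDφ0 r hr]; simp
    · exact (hDφc.abs.mul ((continuousOn_id.mul hφc.abs))).mul (hRPc γ)
  have hf1sqi : IntegrableOn (fun r => f1 r ^ 2) (Set.Ioi 0) volume := by
    apply mkInt
    · intro r hr; simp only [hf1def]; rw [hDφ0 r hr]; simp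
    · exact ((hDφc.abs.mul (hRPc (γ/2))).pow 2)
  have hf2sqi : IntegrableOn (fun r => f2 r ^ 2) (Set.Ioi 0) volume := by
    apply mkInt
    · intro r hr; simp only [hf2def]; rw [hφ0 r hr]; simp
    · exact (((continuousOn_id.mul hφc.abs).mul (hRPc (γ/2))).pow 2)
  have hf12i : IntegrableOn (fun r => f1 r * f2 r) (Set.Ioi 0) volume := by
    apply mkInt
    · intro r hr; simp only [hf1def, hf2def]; rw [hDφ0 r hr]; simp
    · exact (hDφc.abs.mul (hRPc (γ/2))).mul ((continuousOn_id.mul hφc.abs).mul (hRPc (γ/2)))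
  -- rpow algebra
  have hXY : ∀ r ∈ Set.Ioi (0:ℝ),
      Real.sinh r ^ γ * (Real.sinh r ^ (-α) * Real.sinh r ^ (-α)) = Real.sinh r ^ n := by
    intro r hr
    rw [← Real.rpow_add (hspos r hr), ← Real.rpow_add (hspos r hr)]
    congr 1
    rw [hα]; ring
  have hhalf : ∀ r ∈ Set.Ioi (0:ℝ), (Real.sinh r ^ (γ/2)) ^ (2:ℕ) = Real.sinh r ^ γ := by
    intro r hr
    rw [← Real.rpow_natCast (Real.sinh r ^ (γ/2)) 2, ← Real.rpow_mul (hspos r hr).le]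
    norm_num
  -- Step 1: pointwise identity
  have hkey1 : ∀ r ∈ Set.Ioi (0:ℝ), g1 r = g2 r + (g3 r + DF r) := by
    intro r hr
    have hsr := hspos r hr
    have halg := alg_id n γ lam α β (Real.sinh r) (Real.cosh r) (v r) (deriv v r)
      (Real.sinh r ^ (-α)) (Real.sinh r ^ γ) hsr.ne' (Real.cosh_sq r) hγ2 hα hβ
    simp only [hg1def, hg2def, hg3def, hDFdef, hφdef, hDφdef]
    rw [← hXY r hr]
    linear_combination halg
  -- integral of deriv F vanishes
  have hRPCD : ∀ c : ℝ, ContDiffOn ℝ 1 (fun x => Real.sinh x ^ c) (Set.Ioi 0) := by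
    intro c r hr
    have h1 : ContDiffAt ℝ 1 (fun x : ℝ => x ^ c) (Real.sinh r) :=
      Real.contDiffAt_rpow_const_of_ne (hsne r hr)
    exact (h1.comp r Real.contDiff_sinh.contDiffAt).contDiffWithinAt
  have hcothCD : ContDiffOn ℝ 1 (fun x => Real.cosh x / Real.sinh x) (Set.Ioi 0) :=
    Real.contDiff_cosh.contDiffOn.div Real.contDiff_sinh.contDiffOn hsne
  have hφCDon : ContDiffOn ℝ 1 φ (Set.Ioi 0) := by
    rw [hφdef]; exact (hv1.contDiffOn).mul (hRPCD (-α))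
  set F : ℝ → ℝ := fun r => β * (Real.cosh r / Real.sinh r) * φ r ^ 2 * Real.sinh r ^ γ
    with hFdef
  have hF0 : ∀ r ∉ tsupport u, F r = 0 := fun r hr => by
    simp only [hFdef]; rw [hφ0 r hr]; ring
  have hDFint : ∫ r in Set.Ioi (0:ℝ), DF r = 0 := by
    have hFCD : ContDiffOn ℝ 1 F (Set.Ioi 0) := by
      rw [hFdef]
      exact ((contDiffOn_const.mul hcothCD).mul (hφCDon.pow 2)).mul (hRPCD γ)
    have hFC1 : ContDiff ℝ 1 F :=
      glue_contDiff hε0 (fun r hr => hF0 r (hεc (Set.mem_Iio.mpr hr))) hFCD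
    have hFcs : HasCompactSupport F := HasCompactSupport.intro hcs (fun x hx => hF0 x hx)
    have heq := HasCompactSupport.integral_Ioi_deriv_eq hFC1 hFcs 0
    have hFD : ∀ r ∈ Set.Ioi (0:ℝ), HasDerivAt F (DF r) r := by
      intro r hr
      have hsr := hspos r hr
      have h1 := ((Real.hasDerivAt_cosh r).div (Real.hasDerivAt_sinh r) hsr.ne')
      have h2 := (hφD r hr).pow 2
      have h3 := hsinhD γ r hr
      have h4 := ((h1.const_mul β).mul h2).mul h3
      rw [hFdef]
      refine h4.congr_deriv ?_
      simp only [hDFdef]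
      rw [hrpow_sub γ r hr]
      simp only [Pi.pow_apply, Pi.mul_apply, Pi.div_apply]
      push_cast
      ring
    rw [show (∫ r in Set.Ioi (0:ℝ), DF r) = ∫ r in Set.Ioi (0:ℝ), deriv F r from
      setIntegral_congr_fun measurableSet_Ioi (fun r hr => ((hFD r hr).deriv).symm)]
    rw [heq, hF0 0 h0ns, neg_zero]
  have key1 : (∫ r in Set.Ioi (0:ℝ), g1 r)
      = (∫ r in Set.Ioi (0:ℝ), g2 r) + ∫ r in Set.Ioi (0:ℝ), g3 r := by
    have h34 : IntegrableOn (fun r => g3 r + DF r) (Set.Ioi 0) volume := hg3i.add hDFi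
    rw [setIntegral_congr_fun measurableSet_Ioi hkey1]
    rw [integral_add hg2i h34, integral_add hg3i hDFi, hDFint, add_zero]
  -- Step 3: C identity
  have hDF2int : ∫ r in Set.Ioi (0:ℝ), DF2 r = 0 := by
    have hφC1 : ContDiff ℝ 1 φ :=
      glue_contDiff hε0 (fun r hr => hφ0 r (hεc (Set.mem_Iio.mpr hr))) hφCDon
    set F2 : ℝ → ℝ := fun r => φ r ^ 2 * S r with hF2def
    have hF2C1 : ContDiff ℝ 1 F2 := by
      rw [hF2def]; exact (hφC1.pow 2).mul hSCD
    have hF20 : ∀ r ∉ tsupport u, F2 r = 0 := fun r hr => by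
      simp only [hF2def]; rw [hφ0 r hr]; ring
    have hF2cs : HasCompactSupport F2 := HasCompactSupport.intro hcs (fun x hx => hF20 x hx)
    have heq := HasCompactSupport.integral_Ioi_deriv_eq hF2C1 hF2cs 0
    have hF2D : ∀ r ∈ Set.Ioi (0:ℝ), HasDerivAt F2 (DF2 r) r := by
      intro r hr
      have h2 := ((hφD r hr).pow 2).mul (hSD r)
      rw [hF2def]
      refine h2.congr_deriv ?_
      simp only [hDF2def]
      simp only [Pi.pow_apply, Pi.mul_apply, Pi.div_apply]
      push_cast
      ring
    rw [show (∫ r in Set.Ioi (0:ℝ), DF2 r) = ∫ r in Set.Ioi (0:ℝ), deriv F2 r from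
      setIntegral_congr_fun measurableSet_Ioi (fun r hr => ((hF2D r hr).deriv).symm)]
    rw [heq]
    rw [show F2 0 = 0 from hF20 0 h0ns, neg_zero]
  have key3 : (∫ r in Set.Ioi (0:ℝ), g5 r) = -2 * ∫ r in Set.Ioi (0:ℝ), g7 r := by
    have hpt : ∀ r ∈ Set.Ioi (0:ℝ), g5 r = DF2 r + (-2) * g7 r := by
      intro r hr
      simp only [hg5def, hDF2def, hg7def, hφdef]
      rw [← hXY r hr]
      ring
    have hm2 : IntegrableOn (fun r => (-2:ℝ) * g7 r) (Set.Ioi 0) volume := hg7i.const_mul (-2)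
    rw [setIntegral_congr_fun measurableSet_Ioi hpt,
      integral_add hDF2i hm2, hDF2int, zero_add,
      MeasureTheory.integral_const_mul]
  -- nonnegativity
  have hIC0 : 0 ≤ ∫ r in Set.Ioi (0:ℝ), g5 r :=
    setIntegral_nonneg measurableSet_Ioi (fun r hr => by
      simp only [hg5def]
      exact mul_nonneg (sq_nonneg _) (Real.rpow_nonneg (Real.sinh_nonneg_iff.mpr (le_of_lt hr)) n))
  have hIB0 : 0 ≤ ∫ r in Set.Ioi (0:ℝ), g6 r :=
    setIntegral_nonneg measurableSet_Ioi (fun r hr => by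
      simp only [hg6def]
      exact mul_nonneg (mul_nonneg (sq_nonneg _) (sq_nonneg _))
        (Real.rpow_nonneg (Real.sinh_nonneg_iff.mpr (le_of_lt hr)) n))
  have hIQ0 : 0 ≤ ∫ r in Set.Ioi (0:ℝ), g3 r :=
    setIntegral_nonneg measurableSet_Ioi (fun r hr => by
      simp only [hg3def]
      have h1 : (0:ℝ) ≤ 1 - α := by linarith
      exact mul_nonneg (mul_nonneg hβ0 h1) (mul_nonneg (div_nonneg (sq_nonneg _) (sq_nonneg _))
        (Real.rpow_nonneg (Real.sinh_nonneg_iff.mpr (le_of_lt hr)) γ)))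
  have hI80 : 0 ≤ ∫ r in Set.Ioi (0:ℝ), g8 r :=
    setIntegral_nonneg measurableSet_Ioi (fun r hr => by
      simp only [hg8def]
      have hr' : (0:ℝ) ≤ r := le_of_lt hr
      exact mul_nonneg (mul_nonneg (abs_nonneg _) (mul_nonneg hr' (abs_nonneg _)))
        (Real.rpow_nonneg (Real.sinh_nonneg_iff.mpr hr') γ))
  -- monotone bound
  have hmono : (∫ r in Set.Ioi (0:ℝ), -(g7 r))
      ≤ ∫ r in Set.Ioi (0:ℝ), (1/(γ+1)) * g8 r := by
    apply setIntegral_mono_on hg7i.neg (hg8i.const_mul (1/(γ+1))) measurableSet_Ioi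
    intro r hr
    have hneg : (-g7) r = -(g7 r) := rfl
    rw [hneg]
    have hS1 := hSnn r hr
    have hS2 := hSle r hr
    have h1 : -(g7 r) ≤ |φ r * Dφ r| * S r := by
      simp only [hg7def]
      nlinarith [abs_nonneg (φ r * Dφ r), neg_abs_le (φ r * Dφ r)]
    have h2 : |φ r * Dφ r| * S r ≤ |φ r * Dφ r| * (r/(γ+1) * Real.sinh r ^ γ) :=
      mul_le_mul_of_nonneg_left hS2 (abs_nonneg _)
    have h3 : |φ r * Dφ r| * (r/(γ+1) * Real.sinh r ^ γ) = (1/(γ+1)) * g8 r := by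
      simp only [hg8def]
      rw [abs_mul]
      ring
    linarith
  -- Cauchy-Schwarz
  have hCS := my_cs (μ := volume.restrict (Set.Ioi 0)) hf1sqi hf2sqi hf12i
  have hT : (∫ r in Set.Ioi (0:ℝ), f1 r ^ 2) = ∫ r in Set.Ioi (0:ℝ), g2 r := by
    apply setIntegral_congr_fun measurableSet_Ioi
    intro r hr
    simp only [hf1def, hg2def]
    rw [mul_pow, sq_abs, hhalf r hr]
  have hB : (∫ r in Set.Ioi (0:ℝ), f2 r ^ 2) = ∫ r in Set.Ioi (0:ℝ), g6 r := by
    apply setIntegral_congr_fun measurableSet_Ioi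
    intro r hr
    simp only [hf2def, hg6def, hφdef]
    rw [mul_pow, mul_pow, sq_abs, hhalf r hr, ← hXY r hr]
    ring
  have hI : (∫ r in Set.Ioi (0:ℝ), f1 r * f2 r) = ∫ r in Set.Ioi (0:ℝ), g8 r := by
    apply setIntegral_congr_fun measurableSet_Ioi
    intro r hr
    simp only [hf1def, hf2def, hg8def]
    have h2 := hhalf r hr
    rw [pow_two] at h2
    linear_combination (|Dφ r| * r * |φ r|) * h2
  rw [hT, hB, hI] at hCS
  -- assembly
  have hTle : (∫ r in Set.Ioi (0:ℝ), g2 r) ≤ ∫ r in Set.Ioi (0:ℝ), g1 r := by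
    rw [key1]; linarith
  have hCle : (∫ r in Set.Ioi (0:ℝ), g5 r)
      ≤ 2 * ((1/(γ+1)) * ∫ r in Set.Ioi (0:ℝ), g8 r) := by
    rw [key3]
    have e1 : (∫ r in Set.Ioi (0:ℝ), -(g7 r)) = - ∫ r in Set.Ioi (0:ℝ), g7 r := integral_neg _
    have e2 : (∫ r in Set.Ioi (0:ℝ), (1/(γ+1)) * g8 r)
        = (1/(γ+1)) * ∫ r in Set.Ioi (0:ℝ), g8 r := MeasureTheory.integral_const_mul _ _
    rw [e1, e2] at hmono
    linarith
  rw [ge_iff_le]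
  have hfin1 : (∫ r in Set.Ioi (0:ℝ), g5 r) ^ 2
      ≤ (2 * ((1/(γ+1)) * ∫ r in Set.Ioi (0:ℝ), g8 r)) ^ 2 :=
    pow_le_pow_left₀ hIC0 hCle 2
  have hfin2 : h ^ 2 * (2 * ((1/(γ+1)) * ∫ r in Set.Ioi (0:ℝ), g8 r)) ^ 2
      = (∫ r in Set.Ioi (0:ℝ), g8 r) ^ 2 := by
    rw [hh]
    have hc : (γ+1) * (1/(γ+1)) = 1 := mul_one_div_cancel hγ1.ne'
    linear_combination ((∫ r in Set.Ioi (0:ℝ), g8 r) ^ 2 * ((γ+1) * (1/(γ+1)) + 1)) * hc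
  calc h ^ 2 * (∫ r in Set.Ioi (0:ℝ), g5 r) ^ 2
      ≤ h ^ 2 * (2 * ((1/(γ+1)) * ∫ r in Set.Ioi (0:ℝ), g8 r)) ^ 2 :=
        mul_le_mul_of_nonneg_left hfin1 (sq_nonneg h)
    _ = (∫ r in Set.Ioi (0:ℝ), g8 r) ^ 2 := hfin2
    _ ≤ (∫ r in Set.Ioi (0:ℝ), g2 r) * ∫ r in Set.Ioi (0:ℝ), g6 r := hCS
    _ ≤ (∫ r in Set.Ioi (0:ℝ), g1 r) * ∫ r in Set.Ioi (0:ℝ), g6 r :=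
        mul_le_mul_of_nonneg_right hTle hIB0
end

section
/- Let N ≥ 2 be an integer. Then for every test function u, (∫₀^∞ (u''(r) + (N−1)·coth(r)·u'(r))²·(sinh r)^{N−1} dr) · (∫₀^∞ r²·u'(r)²·(sinh r)^{N−1} dr) ≥ (N²/4)·(∫₀^∞ u'(r)²·(sinh r)^{N−1} dr)². -/
open Real MeasureTheory

lemma aux_sinh_le {x : ℝ} (hx : 0 ≤ x) : Real.sinh x ≤ x * Real.cosh x := by
  have h1 : ∫ t in (0:ℝ)..x, Real.cosh t = Real.sinh x - Real.sinh 0 :=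
    intervalIntegral.integral_eq_sub_of_hasDerivAt (fun t _ => Real.hasDerivAt_sinh t)
      (Real.continuous_cosh.intervalIntegrable 0 x)
  have h2 : ∫ t in (0:ℝ)..x, Real.cosh t ≤ ∫ t in (0:ℝ)..x, Real.cosh x := by
    apply intervalIntegral.integral_mono_on hx
      (Real.continuous_cosh.intervalIntegrable 0 x) (intervalIntegrable_const)
    intro t ht
    rw [Real.cosh_le_cosh]
    rw [abs_of_nonneg ht.1, abs_of_nonneg hx]
    exact ht.2
  simp only [intervalIntegral.integral_const, smul_eq_mul, sub_zero, Real.sinh_zero] at h1 h2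
  linarith

lemma aux_cs (a b : ℝ) (f g : ℝ → ℝ) (hf : IntervalIntegrable (fun r => f r ^ 2) volume a b)
    (hg : IntervalIntegrable (fun r => g r ^ 2) volume a b)
    (hfg : IntervalIntegrable (fun r => f r * g r) volume a b) (hab : a ≤ b) :
    (∫ r in a..b, f r * g r) ^ 2 ≤
      (∫ r in a..b, f r ^ 2) * ∫ r in a..b, g r ^ 2 := by
  set A := ∫ r in a..b, f r ^ 2
  set B := ∫ r in a..b, f r * g r
  set C := ∫ r in a..b, g r ^ 2
  have key : ∀ t : ℝ, 0 ≤ A * (t * t) + (2 * B) * t + C := by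
    intro t
    have : ∀ r, (t * f r + g r) ^ 2 = t * t * f r ^ 2 + 2 * t * (f r * g r) + g r ^ 2 := by
      intro r; ring
    have h0 : 0 ≤ ∫ r in a..b, (t * f r + g r) ^ 2 :=
      intervalIntegral.integral_nonneg hab (fun r _ => sq_nonneg _)
    calc (0:ℝ) ≤ ∫ r in a..b, (t * f r + g r) ^ 2 := h0
      _ = ∫ r in a..b, (t * t * f r ^ 2 + 2 * t * (f r * g r) + g r ^ 2) := by
          simp only [this]
      _ = t * t * A + 2 * t * B + C := by
          rw [intervalIntegral.integral_add ((hf.const_mul _).add (hfg.const_mul _)) hg,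
            intervalIntegral.integral_add (hf.const_mul _) (hfg.const_mul _),
            intervalIntegral.integral_const_mul, intervalIntegral.integral_const_mul]
      _ = A * (t * t) + (2 * B) * t + C := by ring
  have hd := discrim_le_zero key
  rw [discrim] at hd
  nlinarith [hd]

set_option maxHeartbeats 1000000 in
/-- **Second-order Heisenberg-Pauli-Weyl uncertainty principle, radial form, case
λ = 0** (Berchio-Ganguly-Roychowdhury). -/
theorem stmt_8 (N : ℕ) (hN : 2 ≤ N)
    (u : ℝ → ℝ) (hu : ContDiff ℝ (⊤ : ℕ∞) u) (hcs : HasCompactSupport u)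
    (hsupp : tsupport u ⊆ Set.Ioi 0) :
    (∫ r in Set.Ioi (0 : ℝ),
        (deriv (deriv u) r + ((N : ℝ) - 1) * (Real.cosh r / Real.sinh r) * deriv u r) ^ 2
          * Real.sinh r ^ ((N : ℝ) - 1))
      * (∫ r in Set.Ioi (0 : ℝ), r ^ 2 * (deriv u r) ^ 2 * Real.sinh r ^ ((N : ℝ) - 1))
    ≥ ((N : ℝ) ^ 2 / 4) *
        (∫ r in Set.Ioi (0 : ℝ), (deriv u r) ^ 2 * Real.sinh r ^ ((N : ℝ) - 1)) ^ 2 := by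
  have hNR : (2:ℝ) ≤ (N:ℝ) := by exact_mod_cast hN
  set v := deriv u with hvdef
  have hu' : ContDiff ℝ (⊤ : ℕ∞) u := hu.of_le (by simp)
  have hv : ContDiff ℝ (⊤ : ℕ∞) v := (contDiff_infty_iff_deriv.mp hu').2
  have hv' : ContDiff ℝ (⊤ : ℕ∞) (deriv v) := (contDiff_infty_iff_deriv.mp hv).2
  have hcv : Continuous v := hv.continuous
  have hcv' : Continuous (deriv v) := hv'.continuous
  have hvsupp : tsupport v ⊆ tsupport u :=
    closure_minimal (support_deriv_subset) (isClosed_tsupport u)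
  have hv'supp : tsupport (deriv v) ⊆ tsupport u :=
    (closure_minimal (support_deriv_subset) (isClosed_tsupport v)).trans hvsupp
  obtain ⟨a, b, ha, hab, hK⟩ : ∃ a b : ℝ, 0 < a ∧ a < b ∧ tsupport u ⊆ Set.Ioo a b := by
    rcases (tsupport u).eq_empty_or_nonempty with h | h
    · exact ⟨1, 2, one_pos, one_lt_two, by simp [h]⟩
    · have hcpt : IsCompact (tsupport u) := hcs
      have h1 := hcpt.sInf_mem h
      have h2 := hcpt.sSup_mem h
      have hpos : 0 < sInf (tsupport u) := hsupp h1
      refine ⟨sInf (tsupport u) / 2, sSup (tsupport u) + 1, by linarith, ?_, ?_⟩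
      · have : sInf (tsupport u) ≤ sSup (tsupport u) :=
          csInf_le_csSup h hcpt.bddBelow hcpt.bddAbove
        linarith
      · intro x hx
        have hx1 := csInf_le hcpt.bddBelow hx
        have hx2 := le_csSup hcpt.bddAbove hx
        exact ⟨by linarith, by linarith⟩
  have hvz : ∀ r, r ∉ Set.Ioo a b → v r = 0 := fun r hr =>
    image_eq_zero_of_notMem_tsupport (fun h => hr (hK (hvsupp h)))
  have hv'z : ∀ r, r ∉ Set.Ioo a b → deriv v r = 0 := fun r hr =>
    image_eq_zero_of_notMem_tsupport (fun h => hr (hK (hv'supp h)))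
  have hva : v a = 0 := hvz a (by simp)
  have hvb : v b = 0 := hvz b (by simp)
  -- conversion to interval integrals
  have hIoo_sub : Set.Ioo a b ⊆ Set.Ioi 0 := fun x hx => lt_trans ha hx.1
  have conv : ∀ g : ℝ → ℝ, (∀ r, r ∉ Set.Ioo a b → g r = 0) →
      (∫ r in Set.Ioi (0:ℝ), g r) = ∫ r in a..b, g r := by
    intro g hg
    rw [intervalIntegral.integral_of_le hab.le]
    rw [setIntegral_eq_integral_of_forall_compl_eq_zero
      (fun x hx => hg x (fun h => hx (hIoo_sub h)))]
    rw [setIntegral_eq_integral_of_forall_compl_eq_zero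
      (fun x hx => hg x (fun h => hx (Set.Ioo_subset_Ioc_self h)))]
  have c1 : (∫ r in Set.Ioi (0:ℝ),
      (deriv v r + ((N : ℝ) - 1) * (Real.cosh r / Real.sinh r) * v r) ^ 2
        * Real.sinh r ^ ((N : ℝ) - 1)) = ∫ r in a..b,
      (deriv v r + ((N : ℝ) - 1) * (Real.cosh r / Real.sinh r) * v r) ^ 2
        * Real.sinh r ^ ((N : ℝ) - 1) := by
    apply conv; intro r hr; simp [hvz r hr, hv'z r hr]
  have c2 : (∫ r in Set.Ioi (0:ℝ), r ^ 2 * v r ^ 2 * Real.sinh r ^ ((N : ℝ) - 1))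
      = ∫ r in a..b, r ^ 2 * v r ^ 2 * Real.sinh r ^ ((N : ℝ) - 1) := by
    apply conv; intro r hr; simp [hvz r hr]
  have c3 : (∫ r in Set.Ioi (0:ℝ), v r ^ 2 * Real.sinh r ^ ((N : ℝ) - 1))
      = ∫ r in a..b, v r ^ 2 * Real.sinh r ^ ((N : ℝ) - 1) := by
    apply conv; intro r hr; simp [hvz r hr]
  rw [c1, c2, c3]
  -- basic positivity on [a,b]
  have hs : ∀ r ∈ Set.uIcc a b, 0 < Real.sinh r := by
    intro r hr
    rw [Set.uIcc_of_le hab.le] at hr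
    exact Real.sinh_pos_iff.mpr (lt_of_lt_of_le ha hr.1)
  have hPcont : ∀ p : ℝ, ContinuousOn (fun r => Real.sinh r ^ p) (Set.uIcc a b) :=
    fun p => Real.continuous_sinh.continuousOn.rpow_const (fun x hx => Or.inl (hs x hx).ne')
  -- integrability of everything we need
  have int1 : IntervalIntegrable
      (fun r => (deriv v r) ^ 2 * Real.sinh r ^ ((N : ℝ) - 1)) volume a b :=
    (((hcv'.pow 2).continuousOn).mul (hPcont _)).intervalIntegrable
  have int2 : IntervalIntegrable
      (fun r => v r ^ 2 * Real.sinh r ^ ((N : ℝ) - 3)) volume a b :=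
    (((hcv.pow 2).continuousOn).mul (hPcont _)).intervalIntegrable
  have int3 : IntervalIntegrable
      (fun r => r ^ 2 * v r ^ 2 * Real.sinh r ^ ((N : ℝ) - 1)) volume a b :=
    ((((continuous_id.pow 2).mul (hcv.pow 2)).continuousOn).mul (hPcont _)).intervalIntegrable
  have int4 : IntervalIntegrable
      (fun r => v r ^ 2 * Real.sinh r ^ ((N : ℝ) - 1)) volume a b :=
    (((hcv.pow 2).continuousOn).mul (hPcont _)).intervalIntegrable
  have int5 : IntervalIntegrable
      (fun r => r * v r * deriv v r * Real.sinh r ^ ((N : ℝ) - 1)) volume a b :=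
    ((((continuous_id.mul hcv).mul hcv').continuousOn).mul (hPcont _)).intervalIntegrable
  have int6 : IntervalIntegrable
      (fun r => v r ^ 2 * Real.sinh r ^ ((N : ℝ) - 1)
        + ((N:ℝ)-1) * (r * (v r ^ 2 * Real.cosh r)) * Real.sinh r ^ ((N : ℝ) - 2))
      volume a b := by
    apply ContinuousOn.intervalIntegrable
    exact (((hcv.pow 2).continuousOn).mul (hPcont _)).add
      ((((continuous_const.mul (continuous_id.mul ((hcv.pow 2).mul
        Real.continuous_cosh)))).continuousOn).mul (hPcont _))
  have intg1 : IntervalIntegrable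
      (fun r => (deriv v r + ((N : ℝ) - 1) * (Real.cosh r / Real.sinh r) * v r) ^ 2
        * Real.sinh r ^ ((N : ℝ) - 1)) volume a b := by
    apply ContinuousOn.intervalIntegrable
    apply ContinuousOn.mul ?_ (hPcont _)
    apply ContinuousOn.pow
    exact hcv'.continuousOn.add ((continuousOn_const.mul
      ((Real.continuous_cosh.continuousOn).div (Real.continuous_sinh.continuousOn)
        (fun x hx => (hs x hx).ne'))).mul hcv.continuousOn)
  -- abbreviations
  set A := ∫ r in a..b,
      (deriv v r + ((N : ℝ) - 1) * (Real.cosh r / Real.sinh r) * v r) ^ 2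
        * Real.sinh r ^ ((N : ℝ) - 1) with hA
  set A1 := ∫ r in a..b, (deriv v r) ^ 2 * Real.sinh r ^ ((N : ℝ) - 1) with hA1
  set B := ∫ r in a..b, r ^ 2 * v r ^ 2 * Real.sinh r ^ ((N : ℝ) - 1) with hB
  set C := ∫ r in a..b, v r ^ 2 * Real.sinh r ^ ((N : ℝ) - 1) with hC
  set D := ∫ r in a..b, r * v r * deriv v r * Real.sinh r ^ ((N : ℝ) - 1) with hD
  -- Step 1 : A = A1 + (N-1) ∫ v² sinh^{N-3} ≥ A1
  have step1 : A1 ≤ A := by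
    have key1 : (∫ r in a..b,
        ((deriv v r + ((N : ℝ) - 1) * (Real.cosh r / Real.sinh r) * v r) ^ 2
          * Real.sinh r ^ ((N : ℝ) - 1)
        - ((deriv v r) ^ 2 * Real.sinh r ^ ((N : ℝ) - 1)
          + ((N:ℝ)-1) * (v r ^ 2 * Real.sinh r ^ ((N : ℝ) - 3)))))
        = (((N:ℝ)-1) * (v b ^2 * (Real.cosh b * Real.sinh b ^ ((N:ℝ)-2))))
          - (((N:ℝ)-1) * (v a ^2 * (Real.cosh a * Real.sinh a ^ ((N:ℝ)-2)))) := by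
      apply intervalIntegral.integral_eq_sub_of_hasDerivAt
      · intro r hr
        have hsr := hs r hr
        have hv1 : HasDerivAt v (deriv v r) r := (hv.differentiable (by simp) r).hasDerivAt
        have h1 : HasDerivAt (fun r => (v r)^2) (2 * v r * deriv v r) r := by
          simpa using hv1.fun_pow 2
        have h2 : HasDerivAt (fun r => Real.sinh r ^ ((N:ℝ)-2))
            (((N:ℝ)-2) * Real.sinh r ^ ((N:ℝ)-3) * Real.cosh r) r := by
          have h := (Real.hasDerivAt_sinh r).rpow_const (p := (N:ℝ)-2) (Or.inl hsr.ne')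
          rw [show (N:ℝ)-2-1 = (N:ℝ)-3 by ring] at h
          convert h using 1
          ring
        have h3 := (Real.hasDerivAt_cosh r).mul h2
        have h4 := (h1.mul h3).const_mul ((N:ℝ)-1)
        convert h4 using 1
        · rfl
        · rfl
        simp only [Pi.mul_apply]
        have e1 : Real.sinh r ^ ((N:ℝ)-2) = Real.sinh r ^ ((N:ℝ)-3) * Real.sinh r := by
          rw [show (N:ℝ)-2 = ((N:ℝ)-3)+1 by ring, Real.rpow_add_one hsr.ne']
        have e2 : Real.sinh r ^ ((N:ℝ)-1)
            = Real.sinh r ^ ((N:ℝ)-3) * Real.sinh r * Real.sinh r := by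
          rw [show (N:ℝ)-1 = (((N:ℝ)-3)+1)+1 by ring, Real.rpow_add_one hsr.ne',
            Real.rpow_add_one hsr.ne']
        rw [e1, e2]
        have hc := Real.cosh_sq r
        field_simp
        linear_combination (((N:ℝ)-1) * v r ^ 2) * hc
      · exact (intg1.sub (int1.add (int2.const_mul _)))
    rw [hvb, hva] at key1
    simp only [ne_eq, OfNat.ofNat_ne_zero, not_false_eq_true, zero_pow, zero_mul, mul_zero,
      sub_zero] at key1
    have hsplit : (∫ r in a..b,
        ((deriv v r + ((N : ℝ) - 1) * (Real.cosh r / Real.sinh r) * v r) ^ 2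
          * Real.sinh r ^ ((N : ℝ) - 1)
        - ((deriv v r) ^ 2 * Real.sinh r ^ ((N : ℝ) - 1)
          + ((N:ℝ)-1) * (v r ^ 2 * Real.sinh r ^ ((N : ℝ) - 3)))))
        = A - (A1 + ((N:ℝ)-1) * ∫ r in a..b, v r ^ 2 * Real.sinh r ^ ((N : ℝ) - 3)) := by
      rw [intervalIntegral.integral_sub intg1 (int1.add (int2.const_mul _)),
        intervalIntegral.integral_add int1 (int2.const_mul _),
        intervalIntegral.integral_const_mul]
    rw [hsplit] at key1
    have hR : 0 ≤ ∫ r in a..b, v r ^ 2 * Real.sinh r ^ ((N : ℝ) - 3) := by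
      apply intervalIntegral.integral_nonneg hab.le
      intro r hr
      have hsr := hs r (by rwa [Set.uIcc_of_le hab.le])
      positivity
    nlinarith [key1, hR]
  -- Step 2 : Cauchy-Schwarz  D² ≤ A1 * B
  have step2 : D ^ 2 ≤ A1 * B := by
    have hf2 : Set.EqOn (fun r => (deriv v r * Real.sinh r ^ (((N:ℝ)-1)/2)) ^ 2)
        (fun r => (deriv v r) ^ 2 * Real.sinh r ^ ((N : ℝ) - 1)) (Set.uIcc a b) := by
      intro r hr
      have hsr := hs r hr
      simp only [mul_pow]
      rw [← Real.rpow_natCast (Real.sinh r ^ (((N:ℝ)-1)/2)) 2, ← Real.rpow_mul hsr.le,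
        show ((N:ℝ)-1)/2 * ((2:ℕ):ℝ) = (N:ℝ)-1 by push_cast; ring]
    have hg2 : Set.EqOn (fun r => (r * v r * Real.sinh r ^ (((N:ℝ)-1)/2)) ^ 2)
        (fun r => r ^ 2 * v r ^ 2 * Real.sinh r ^ ((N : ℝ) - 1)) (Set.uIcc a b) := by
      intro r hr
      have hsr := hs r hr
      simp only [mul_pow]
      rw [← Real.rpow_natCast (Real.sinh r ^ (((N:ℝ)-1)/2)) 2, ← Real.rpow_mul hsr.le,
        show ((N:ℝ)-1)/2 * ((2:ℕ):ℝ) = (N:ℝ)-1 by push_cast; ring]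
    have hfg : Set.EqOn (fun r => (deriv v r * Real.sinh r ^ (((N:ℝ)-1)/2))
        * (r * v r * Real.sinh r ^ (((N:ℝ)-1)/2)))
        (fun r => r * v r * deriv v r * Real.sinh r ^ ((N : ℝ) - 1)) (Set.uIcc a b) := by
      intro r hr
      have hsr := hs r hr
      simp only
      rw [show (deriv v r * Real.sinh r ^ (((N:ℝ)-1)/2))
        * (r * v r * Real.sinh r ^ (((N:ℝ)-1)/2))
        = r * v r * deriv v r * (Real.sinh r ^ (((N:ℝ)-1)/2) * Real.sinh r ^ (((N:ℝ)-1)/2))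
        by ring, ← Real.rpow_add hsr,
        show ((N:ℝ)-1)/2 + ((N:ℝ)-1)/2 = (N:ℝ)-1 by ring]
    have e1 : (∫ r in a..b, (deriv v r * Real.sinh r ^ (((N:ℝ)-1)/2)) ^ 2) = A1 :=
      intervalIntegral.integral_congr hf2
    have e2 : (∫ r in a..b, (r * v r * Real.sinh r ^ (((N:ℝ)-1)/2)) ^ 2) = B :=
      intervalIntegral.integral_congr hg2
    have e3 : (∫ r in a..b, (deriv v r * Real.sinh r ^ (((N:ℝ)-1)/2))
        * (r * v r * Real.sinh r ^ (((N:ℝ)-1)/2))) = D :=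
      intervalIntegral.integral_congr hfg
    have hfc : ContinuousOn (fun r => deriv v r * Real.sinh r ^ (((N:ℝ)-1)/2))
        (Set.uIcc a b) := hcv'.continuousOn.mul (hPcont _)
    have hgc : ContinuousOn (fun r => r * v r * Real.sinh r ^ (((N:ℝ)-1)/2))
        (Set.uIcc a b) := ((continuous_id.mul hcv).continuousOn).mul (hPcont _)
    have := aux_cs a b (fun r => deriv v r * Real.sinh r ^ (((N:ℝ)-1)/2))
      (fun r => r * v r * Real.sinh r ^ (((N:ℝ)-1)/2))
      ((hfc.pow 2).intervalIntegrable) ((hgc.pow 2).intervalIntegrable)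
      ((hfc.mul hgc).intervalIntegrable) hab.le
    rw [e1, e2, e3] at this
    exact this
  -- Step 3 : -2D ≥ N * C
  have step3 : (N:ℝ) * C ≤ -(2*D) := by
    have key2 : (∫ r in a..b,
        (2 * (r * v r * deriv v r * Real.sinh r ^ ((N : ℝ) - 1))
          + (v r ^ 2 * Real.sinh r ^ ((N : ℝ) - 1)
            + ((N:ℝ)-1) * (r * (v r ^ 2 * Real.cosh r)) * Real.sinh r ^ ((N : ℝ) - 2))))
        = (b * v b ^ 2 * Real.sinh b ^ ((N:ℝ)-1)) - (a * v a ^ 2 * Real.sinh a ^ ((N:ℝ)-1)) := by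
      apply intervalIntegral.integral_eq_sub_of_hasDerivAt
      · intro r hr
        have hsr := hs r hr
        have hv1 : HasDerivAt v (deriv v r) r := (hv.differentiable (by simp) r).hasDerivAt
        have h1 : HasDerivAt (fun r => (v r)^2) (2 * v r * deriv v r) r := by
          simpa using hv1.fun_pow 2
        have h2 : HasDerivAt (fun r => Real.sinh r ^ ((N:ℝ)-1))
            (((N:ℝ)-1) * Real.sinh r ^ ((N:ℝ)-2) * Real.cosh r) r := by
          have h := (Real.hasDerivAt_sinh r).rpow_const (p := (N:ℝ)-1) (Or.inl hsr.ne')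
          rw [show (N:ℝ)-1-1 = (N:ℝ)-2 by ring] at h
          convert h using 1
          ring
        have h4 := ((hasDerivAt_id r).mul h1).mul h2
        convert h4 using 1
        · rfl
        · rfl
        simp only [Pi.mul_apply, id_eq]
        ring
      · exact (int5.const_mul 2).add int6
    rw [hvb, hva] at key2
    simp only [ne_eq, OfNat.ofNat_ne_zero, not_false_eq_true, zero_pow, mul_zero, zero_mul,
      sub_zero] at key2
    have hsplit : (∫ r in a..b,
        (2 * (r * v r * deriv v r * Real.sinh r ^ ((N : ℝ) - 1))
          + (v r ^ 2 * Real.sinh r ^ ((N : ℝ) - 1)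
            + ((N:ℝ)-1) * (r * (v r ^ 2 * Real.cosh r)) * Real.sinh r ^ ((N : ℝ) - 2))))
        = 2 * D + ∫ r in a..b, (v r ^ 2 * Real.sinh r ^ ((N : ℝ) - 1)
            + ((N:ℝ)-1) * (r * (v r ^ 2 * Real.cosh r)) * Real.sinh r ^ ((N : ℝ) - 2)) := by
      rw [intervalIntegral.integral_add (int5.const_mul 2) int6,
        intervalIntegral.integral_const_mul]
    rw [hsplit] at key2
    have hmono : (N:ℝ) * C ≤ ∫ r in a..b, (v r ^ 2 * Real.sinh r ^ ((N : ℝ) - 1)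
        + ((N:ℝ)-1) * (r * (v r ^ 2 * Real.cosh r)) * Real.sinh r ^ ((N : ℝ) - 2)) := by
      rw [hC, ← intervalIntegral.integral_const_mul]
      apply intervalIntegral.integral_mono_on hab.le (int4.const_mul _) int6
      intro r hr
      have hr' : r ∈ Set.uIcc a b := by rwa [Set.uIcc_of_le hab.le]
      have hsr := hs r hr'
      have hrpos : 0 < r := lt_of_lt_of_le ha hr.1
      have e1 : Real.sinh r ^ ((N:ℝ)-1) = Real.sinh r ^ ((N:ℝ)-2) * Real.sinh r := by
        rw [show (N:ℝ)-1 = ((N:ℝ)-2)+1 by ring, Real.rpow_add_one hsr.ne']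
      have hq : 0 < Real.sinh r ^ ((N:ℝ)-2) := Real.rpow_pos_of_pos hsr _
      have hsl : Real.sinh r ≤ r * Real.cosh r := aux_sinh_le hrpos.le
      have hfact : 0 ≤ ((N:ℝ)-1) * (v r ^ 2 * (Real.sinh r ^ ((N:ℝ)-2)
          * (r * Real.cosh r - Real.sinh r))) := by
        apply mul_nonneg (by linarith) (mul_nonneg (sq_nonneg _)
          (mul_nonneg hq.le (by linarith)))
      rw [e1]
      nlinarith [hfact]
    linarith
  -- positivity
  have hBpos : 0 ≤ B := by
    apply intervalIntegral.integral_nonneg hab.le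
    intro r hr
    have hsr := hs r (by rwa [Set.uIcc_of_le hab.le])
    positivity
  have hCpos : 0 ≤ C := by
    apply intervalIntegral.integral_nonneg hab.le
    intro r hr
    have hsr := hs r (by rwa [Set.uIcc_of_le hab.le])
    positivity
  have hA1pos : 0 ≤ A1 := by
    apply intervalIntegral.integral_nonneg hab.le
    intro r hr
    have hsr := hs r (by rwa [Set.uIcc_of_le hab.le])
    positivity
  -- assemble
  have hNC : 0 ≤ (N:ℝ) * C := mul_nonneg (by positivity) hCpos
  have h4 : (N:ℝ)^2 * C^2 ≤ 4 * D^2 := by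
    nlinarith [mul_self_le_mul_self hNC step3]
  nlinarith [step1, step2, hBpos, hA1pos, h4]
end

section
/- Let N ≥ 2 be an integer, let λ ∈ [0, ((N−1)/2)²], and set γ = √((N−1)² − 4λ) and h = (γ+1)/2. Then for every test function u, (∫₀^∞ ((u''(r) + (N−1)·coth(r)·u'(r))² − λ·u'(r)²)·(sinh r)^{N−1} dr) · (∫₀^∞ r²·u'(r)²·(sinh r)^{N−1} dr) ≥ h²·(∫₀^∞ u'(r)²·(sinh r)^{N−1} dr)² + (∫₀^∞ r²·u'(r)²·(sinh r)^{N−1} dr) · ( ((N/2)² − h²)·∫₀^∞ (u'(r)²/ sinh² r)·(sinh r)^{N−1} dr + γ·h·∫₀^∞ ((r·coth r − 1)/r²)·u'(r)²·(sinh r)^{N−1} dr ). -/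
open Real MeasureTheory

private lemma aux_integrableOn {f : ℝ → ℝ} {ε M : ℝ} (hε : 0 < ε)
    (hc : ContinuousOn f (Set.Ioi 0))
    (h0 : ∀ r, r ∉ Set.Icc ε M → f r = 0) :
    MeasureTheory.IntegrableOn f (Set.Ioi 0) := by
  have hsub : Set.Icc ε M ⊆ Set.Ioi 0 := fun x hx => lt_of_lt_of_le hε hx.1
  have hsupp : Function.support f ⊆ Set.Icc ε M := by
    intro x hx
    by_contra hxn
    exact hx (h0 x hxn)
  have h1 : MeasureTheory.IntegrableOn f (Set.Icc ε M) :=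
    (hc.mono hsub).integrableOn_compact isCompact_Icc
  exact ((integrableOn_iff_integrable_of_support_subset hsupp).mp h1).integrableOn


private lemma aux_id0 (Nr γ h t r s c W vv vp : ℝ) (hs : s ≠ 0) (hr : r ≠ 0)
    (hh : h = (γ + 1) / 2) :
    ((vp + (Nr - 1) * (c / s) * vv) ^ 2 - ((Nr - 1) ^ 2 - γ ^ 2) / 4 * vv ^ 2) * W
    = (vp + ((Nr - 1) / 2 * (c / s) + t * r - h / r) * vv) ^ 2 * W
      + ((((Nr - 1) / 2 * ((s * s - c * c) / s ^ 2) - t + (-(h / r ^ 2))) * vv ^ 2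
            + ((Nr - 1) / 2 * (c / s) - t * r + h / r) * (2 * vv * vp)) * W
          + ((Nr - 1) / 2 * (c / s) - t * r + h / r) * vv ^ 2 * (c * (Nr - 1) * (W / s))
        + (t + 2 * h * t - t ^ 2 * r ^ 2 + ((Nr / 2) ^ 2 - h ^ 2) / s ^ 2
            + γ * h * ((r * (c / s) - 1) / r ^ 2)
            + (γ / 2 * (c / s) - h / r) ^ 2 + γ / (2 * s ^ 2)) * (vv ^ 2 * W))
      + (((Nr - 1) ^ 2 - γ ^ 2) / 4 + (Nr - 1) / 2) * (vv ^ 2 * W)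
        * ((c / s) ^ 2 - 1 - 1 / s ^ 2) := by
  subst hh
  field_simp
  ring

private lemma aux_identity (Nr γ h t lam r s c W vv vp : ℝ) (hs : s ≠ 0) (hr : r ≠ 0)
    (hh : h = (γ + 1) / 2) (hlam : lam = ((Nr - 1) ^ 2 - γ ^ 2) / 4)
    (hc2 : c ^ 2 = s ^ 2 + 1) :
    ((vp + (Nr - 1) * (c / s) * vv) ^ 2 - lam * vv ^ 2) * W
    = (vp + ((Nr - 1) / 2 * (c / s) + t * r - h / r) * vv) ^ 2 * W
      + ((((Nr - 1) / 2 * ((s * s - c * c) / s ^ 2) - t + (-(h / r ^ 2))) * vv ^ 2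
            + ((Nr - 1) / 2 * (c / s) - t * r + h / r) * (2 * vv * vp)) * W
          + ((Nr - 1) / 2 * (c / s) - t * r + h / r) * vv ^ 2 * (c * (Nr - 1) * (W / s))
        + (t + 2 * h * t - t ^ 2 * r ^ 2 + ((Nr / 2) ^ 2 - h ^ 2) / s ^ 2
            + γ * h * ((r * (c / s) - 1) / r ^ 2)
            + (γ / 2 * (c / s) - h / r) ^ 2 + γ / (2 * s ^ 2)) * (vv ^ 2 * W)) := by
  have h0 := aux_id0 Nr γ h t r s c W vv vp hs hr hh
  have hz : (c / s) ^ 2 - 1 - 1 / s ^ 2 = 0 := by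
    field_simp
    linarith
  rw [hlam, h0, hz, mul_zero, add_zero]

set_option maxHeartbeats 4000000 in
/-- **Improved second-order Heisenberg-Pauli-Weyl uncertainty principle with
remainder terms, radial form** (Berchio-Ganguly-Roychowdhury). -/
theorem stmt_9 (N : ℕ) (hN : 2 ≤ N) (lam : ℝ)
    (hlam : lam ∈ Set.Icc (0 : ℝ) ((((N : ℝ) - 1) / 2) ^ 2))
    (γ h : ℝ) (hγ : γ = Real.sqrt (((N : ℝ) - 1) ^ 2 - 4 * lam))
    (hh : h = (γ + 1) / 2)
    (u : ℝ → ℝ) (hu : ContDiff ℝ (⊤ : ℕ∞) u) (hcs : HasCompactSupport u)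
    (hsupp : tsupport u ⊆ Set.Ioi 0) :
    (∫ r in Set.Ioi (0 : ℝ),
        ((deriv (deriv u) r + ((N : ℝ) - 1) * (Real.cosh r / Real.sinh r) * deriv u r) ^ 2
          - lam * (deriv u r) ^ 2) * Real.sinh r ^ ((N : ℝ) - 1))
      * (∫ r in Set.Ioi (0 : ℝ), r ^ 2 * (deriv u r) ^ 2 * Real.sinh r ^ ((N : ℝ) - 1))
    ≥ h ^ 2 * (∫ r in Set.Ioi (0 : ℝ), (deriv u r) ^ 2 * Real.sinh r ^ ((N : ℝ) - 1)) ^ 2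
      + (∫ r in Set.Ioi (0 : ℝ), r ^ 2 * (deriv u r) ^ 2 * Real.sinh r ^ ((N : ℝ) - 1))
          * ((((N : ℝ) / 2) ^ 2 - h ^ 2) * (∫ r in Set.Ioi (0 : ℝ),
              (deriv u r) ^ 2 / Real.sinh r ^ 2 * Real.sinh r ^ ((N : ℝ) - 1))
            + γ * h * ∫ r in Set.Ioi (0 : ℝ),
              ((r * (Real.cosh r / Real.sinh r) - 1) / r ^ 2) * (deriv u r) ^ 2
                * Real.sinh r ^ ((N : ℝ) - 1)) := by
  -- basic constants
  have hγ0 : 0 ≤ γ := hγ ▸ Real.sqrt_nonneg _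
  have harg : 0 ≤ ((N : ℝ) - 1) ^ 2 - 4 * lam := by
    have h1 := hlam.1
    have h2 := hlam.2
    nlinarith
  have hγ2 : γ ^ 2 = ((N : ℝ) - 1) ^ 2 - 4 * lam := by
    rw [hγ, Real.sq_sqrt harg]
  have hh0 : 0 < h := by rw [hh]; linarith
  -- the derivative of u
  set v : ℝ → ℝ := deriv u with hvdef
  have huD : ContDiff ℝ (⊤ : ℕ∞) u := hu.of_le (by simp)
  have hvCD : ContDiff ℝ (⊤ : ℕ∞) v := (contDiff_infty_iff_deriv.mp huD).2
  have hvcont : Continuous v := hvCD.continuous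
  have hvdiff : Differentiable ℝ v := (contDiff_infty_iff_deriv.mp hvCD).1
  have hv'cont : Continuous (deriv v) := (contDiff_infty_iff_deriv.mp hvCD).2.continuous
  -- support bounds
  obtain ⟨ε, Mx, hε, hKsub⟩ : ∃ ε Mx : ℝ, 0 < ε ∧ tsupport u ⊆ Set.Icc ε Mx := by
    by_cases hne : (tsupport u).Nonempty
    · have hKc : IsCompact (tsupport u) := hcs
      refine ⟨sInf (tsupport u), sSup (tsupport u), hsupp (hKc.sInf_mem hne), ?_⟩
      intro x hx
      exact ⟨csInf_le hKc.bddBelow hx, le_csSup hKc.bddAbove hx⟩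
    · exact ⟨1, 0, one_pos, by
        rw [Set.not_nonempty_iff_eq_empty.mp hne]; exact Set.empty_subset _⟩
  have hv0 : ∀ r, r ∉ Set.Icc ε Mx → v r = 0 := by
    intro r hr
    have h1 : r ∉ tsupport v := fun hmem => hr (hKsub (closure_minimal support_deriv_subset (isClosed_tsupport u) hmem))
    exact image_eq_zero_of_notMem_tsupport h1
  have hv'0 : ∀ r, r ∉ Set.Icc ε Mx → deriv v r = 0 := by
    intro r hr
    have h1 : r ∉ tsupport u := fun hmem => hr (hKsub hmem)
    have h2 : r ∉ tsupport v := fun hmem => h1 (closure_minimal support_deriv_subset (isClosed_tsupport u) hmem)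
    have h3 : r ∉ tsupport (deriv v) := fun hmem => h2 (closure_minimal support_deriv_subset (isClosed_tsupport v) hmem)
    exact image_eq_zero_of_notMem_tsupport h3
  -- continuity facts
  have hsne : ∀ r ∈ Set.Ioi (0 : ℝ), Real.sinh r ≠ 0 :=
    fun r hr => (Real.sinh_pos_iff.mpr hr).ne'
  have hXc : ContinuousOn (fun r : ℝ => Real.cosh r / Real.sinh r) (Set.Ioi 0) :=
    Real.continuous_cosh.continuousOn.div Real.continuous_sinh.continuousOn hsne
  have hWc : ContinuousOn (fun r : ℝ => Real.sinh r ^ ((N : ℝ) - 1)) (Set.Ioi 0) :=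
    Real.continuous_sinh.continuousOn.rpow_const (fun r hr => Or.inl (hsne r hr))
  have hW0 : ∀ r ∈ Set.Ioi (0 : ℝ), 0 ≤ Real.sinh r ^ ((N : ℝ) - 1) :=
    fun r hr => Real.rpow_nonneg (Real.sinh_pos_iff.mpr hr).le _
  have hrne : ∀ r ∈ Set.Ioi (0 : ℝ), (r : ℝ) ≠ 0 := fun r hr => ne_of_gt hr
  have hr2ne : ∀ r ∈ Set.Ioi (0 : ℝ), (r : ℝ) ^ 2 ≠ 0 := fun r hr => pow_ne_zero 2 (ne_of_gt hr)
  have hs2ne : ∀ r ∈ Set.Ioi (0 : ℝ), Real.sinh r ^ 2 ≠ 0 :=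
    fun r hr => pow_ne_zero 2 (hsne r hr)
  -- the integrand functions
  set f1 : ℝ → ℝ := fun r => (v r) ^ 2 * Real.sinh r ^ ((N : ℝ) - 1) with hf1def
  set f2 : ℝ → ℝ := fun r => r ^ 2 * (v r) ^ 2 * Real.sinh r ^ ((N : ℝ) - 1) with hf2def
  set f3 : ℝ → ℝ := fun r => (v r) ^ 2 / Real.sinh r ^ 2 * Real.sinh r ^ ((N : ℝ) - 1) with hf3def
  set f4 : ℝ → ℝ := fun r => ((r * (Real.cosh r / Real.sinh r) - 1) / r ^ 2) * (v r) ^ 2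
      * Real.sinh r ^ ((N : ℝ) - 1) with hf4def
  set fA : ℝ → ℝ := fun r => ((deriv v r + ((N : ℝ) - 1) * (Real.cosh r / Real.sinh r) * v r) ^ 2
      - lam * (v r) ^ 2) * Real.sinh r ^ ((N : ℝ) - 1) with hfAdef
  -- integrability of the base integrands
  have hf1int : IntegrableOn f1 (Set.Ioi 0) := by
    apply aux_integrableOn (M := Mx) hε ((hvcont.pow 2).continuousOn.mul hWc)
    intro r hr; simp [hf1def, hv0 r hr]
  have hf2int : IntegrableOn f2 (Set.Ioi 0) := by
    apply aux_integrableOn (M := Mx) hε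
      (((continuous_pow 2).continuousOn.mul (hvcont.pow 2).continuousOn).mul hWc)
    intro r hr; simp [hf2def, hv0 r hr]
  have hf3int : IntegrableOn f3 (Set.Ioi 0) := by
    apply aux_integrableOn (M := Mx) hε
      (((((hvcont.pow 2).continuousOn).div
        ((Real.continuous_sinh.pow 2).continuousOn) hs2ne)).mul hWc)
    intro r hr; simp [hf3def, hv0 r hr]
  have hf4int : IntegrableOn f4 (Set.Ioi 0) := by
    apply aux_integrableOn (M := Mx) hε
    · exact ((((continuous_id.continuousOn.mul hXc).sub continuousOn_const).div
        (continuous_pow 2).continuousOn hr2ne).mul (hvcont.pow 2).continuousOn).mul hWc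
    · intro r hr; simp [hf4def, hv0 r hr]
  have hf10 : ∀ r ∈ Set.Ioi (0:ℝ), 0 ≤ f1 r := by
    intro r hr
    exact mul_nonneg (sq_nonneg _) (hW0 r hr)
  have hIC0 : 0 ≤ ∫ r in Set.Ioi (0:ℝ), f1 r := setIntegral_nonneg measurableSet_Ioi hf10
  have hIB0 : 0 ≤ ∫ r in Set.Ioi (0:ℝ), f2 r := by
    apply setIntegral_nonneg measurableSet_Ioi
    intro r hr
    exact mul_nonneg (mul_nonneg (sq_nonneg _) (sq_nonneg _)) (hW0 r hr)
  -- the key inequality, for an arbitrary nonnegative parameter t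
  have key : ∀ t : ℝ, 0 ≤ t →
      2 * h * t * (∫ r in Set.Ioi (0:ℝ), f1 r) - t ^ 2 * (∫ r in Set.Ioi (0:ℝ), f2 r)
        + (((N : ℝ) / 2) ^ 2 - h ^ 2) * (∫ r in Set.Ioi (0:ℝ), f3 r)
        + γ * h * (∫ r in Set.Ioi (0:ℝ), f4 r)
      ≤ ∫ r in Set.Ioi (0:ℝ), fA r := by
    intro t ht
    set Φ : ℝ → ℝ := fun r => ((N : ℝ) - 1) / 2 * (Real.cosh r / Real.sinh r) - t * r + h / r
      with hΦdef
    set G : ℝ → ℝ := fun r => Φ r * (v r) ^ 2 * Real.sinh r ^ ((N : ℝ) - 1) with hGdef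
    set G' : ℝ → ℝ := fun r =>
      ((((N : ℝ) - 1) / 2 * ((Real.sinh r * Real.sinh r - Real.cosh r * Real.cosh r)
            / Real.sinh r ^ 2) - t + (-(h / r ^ 2))) * (v r) ^ 2
          + Φ r * (2 * v r * deriv v r)) * Real.sinh r ^ ((N : ℝ) - 1)
        + Φ r * (v r) ^ 2
          * (Real.cosh r * ((N : ℝ) - 1) * (Real.sinh r ^ ((N : ℝ) - 1) / Real.sinh r))
      with hG'def
    set fS : ℝ → ℝ := fun r =>
      (deriv v r + (((N : ℝ) - 1) / 2 * (Real.cosh r / Real.sinh r) + t * r - h / r) * v r) ^ 2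
        * Real.sinh r ^ ((N : ℝ) - 1) with hfSdef
    set fR : ℝ → ℝ := fun r =>
      (t + 2 * h * t - t ^ 2 * r ^ 2 + (((N : ℝ) / 2) ^ 2 - h ^ 2) / Real.sinh r ^ 2
          + γ * h * ((r * (Real.cosh r / Real.sinh r) - 1) / r ^ 2)
          + (γ / 2 * (Real.cosh r / Real.sinh r) - h / r) ^ 2 + γ / (2 * Real.sinh r ^ 2))
        * ((v r) ^ 2 * Real.sinh r ^ ((N : ℝ) - 1)) with hfRdef
    set fP : ℝ → ℝ := fun r => 2 * h * t * f1 r + (-(t ^ 2)) * f2 r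
      + (((N : ℝ) / 2) ^ 2 - h ^ 2) * f3 r + γ * h * f4 r with hfPdef
    -- derivative of G on Ioi 0
    have hGderiv : ∀ r ∈ Set.Ioi (0:ℝ), HasDerivAt G (G' r) r := by
      intro r hr
      have hr0 : (0:ℝ) < r := hr
      have hs0 : Real.sinh r ≠ 0 := hsne r hr
      have hΦd : HasDerivAt Φ
          (((N : ℝ) - 1) / 2 * ((Real.sinh r * Real.sinh r - Real.cosh r * Real.cosh r)
            / Real.sinh r ^ 2) - t + (-(h / r ^ 2))) r := by
        have h1 : HasDerivAt (fun y : ℝ => Real.cosh y / Real.sinh y)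
            ((Real.sinh r * Real.sinh r - Real.cosh r * Real.cosh r) / Real.sinh r ^ 2) r :=
          (Real.hasDerivAt_cosh r).div (Real.hasDerivAt_sinh r) hs0
        have h2 : HasDerivAt (fun y : ℝ => h / y) (-(h / r ^ 2)) r := by
          have h3 := (hasDerivAt_inv (ne_of_gt hr0)).const_mul h
          simpa [div_eq_mul_inv, neg_div, mul_div_assoc] using h3
        have h3 : HasDerivAt (fun y : ℝ => t * y) t r := by
          simpa using (hasDerivAt_id r).const_mul t
        exact ((h1.const_mul (((N : ℝ) - 1) / 2)).sub h3).add h2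
      have hv2 : HasDerivAt (fun y => (v y) ^ 2) (2 * v r * deriv v r) r := by
        simpa [mul_comm] using ((hvdiff r).hasDerivAt.fun_pow 2)
      have hWd : HasDerivAt (fun y : ℝ => Real.sinh y ^ ((N : ℝ) - 1))
          (Real.cosh r * ((N : ℝ) - 1) * (Real.sinh r ^ ((N : ℝ) - 1) / Real.sinh r)) r := by
        have h1 := (Real.hasDerivAt_sinh r).rpow_const (p := (N : ℝ) - 1) (Or.inl hs0)
        rwa [Real.rpow_sub_one hs0] at h1
      exact ((hΦd.mul hv2).mul hWd)
    -- vanishing of G and G' outside the support interval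
    have hG'0 : ∀ r, r ∉ Set.Icc ε Mx → G' r = 0 := by
      intro r hr
      simp [hG'def, hv0 r hr, hv'0 r hr]
    have hG0 : ∀ r, r ∉ Set.Icc ε Mx → G r = 0 := by
      intro r hr
      simp [hGdef, hv0 r hr]
    -- continuity of G' on Ioi 0
    have hΦc : ContinuousOn Φ (Set.Ioi 0) := by
      apply ((hXc.const_smul (((N : ℝ) - 1) / 2)).sub
        (continuous_const.mul continuous_id).continuousOn).add
      exact continuousOn_const.div continuous_id.continuousOn hrne
    have hG'c : ContinuousOn G' (Set.Ioi 0) := by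
      apply ContinuousOn.add
      · apply ContinuousOn.mul _ hWc
        apply ContinuousOn.add
        · apply ContinuousOn.mul _ (hvcont.pow 2).continuousOn
          apply ContinuousOn.add
          · apply ContinuousOn.sub _ continuousOn_const
            exact ContinuousOn.mul continuousOn_const
              (((Real.continuous_sinh.mul Real.continuous_sinh).sub
                (Real.continuous_cosh.mul Real.continuous_cosh)).continuousOn.div
                  (Real.continuous_sinh.pow 2).continuousOn hs2ne)
          · exact (continuousOn_const.div (continuous_pow 2).continuousOn hr2ne).neg
        · exact hΦc.mul (((continuous_const.mul hvcont).mul hv'cont).continuousOn)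
      · apply (hΦc.mul (hvcont.pow 2).continuousOn).mul
        exact (Real.continuous_cosh.continuousOn.mul continuousOn_const).mul
          (hWc.div Real.continuous_sinh.continuousOn hsne)
    -- the integral of G' over Ioi 0 vanishes
    have hintG' : ∫ r in Set.Ioi (0:ℝ), G' r = 0 := by
      set b : ℝ := max Mx ε + 1 with hbdef
      have hab : ε / 2 ≤ b := by
        have h1 : ε ≤ max Mx ε := le_max_right _ _
        simp only [hbdef]; linarith
      have hsub2 : Set.Icc ε Mx ⊆ Set.Ioc (ε / 2) b := by
        intro x hx
        constructor
        · linarith [hx.1]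
        · have : Mx ≤ max Mx ε := le_max_left _ _
          simp only [hbdef]; linarith [hx.2]
      have hsuppG' : Function.support G' ⊆ Set.Ioc (ε / 2) b := by
        intro x hx
        by_contra hxn
        apply hx
        apply hG'0
        intro hmem
        exact hxn (hsub2 hmem)
      have e1 : ∫ r in Set.Ioi (0:ℝ), G' r = ∫ r, G' r := by
        apply setIntegral_eq_integral_of_forall_compl_eq_zero
        intro r hr
        apply hG'0
        intro hmem
        exact hr (lt_of_lt_of_le hε hmem.1)
      have e2 : ∫ r in (ε / 2)..b, G' r = ∫ r, G' r :=
        intervalIntegral.integral_eq_integral_of_support_subset hsuppG'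
      have huIcc : Set.uIcc (ε / 2) b = Set.Icc (ε / 2) b := Set.uIcc_of_le hab
      have e3 : ∫ r in (ε / 2)..b, G' r = G b - G (ε / 2) := by
        apply intervalIntegral.integral_eq_sub_of_hasDerivAt
        · intro x hx
          rw [huIcc] at hx
          exact hGderiv x (lt_of_lt_of_le (by linarith) hx.1)
        · apply ContinuousOn.intervalIntegrable
          apply hG'c.mono
          rw [huIcc]
          intro x hx
          exact lt_of_lt_of_le (by linarith) hx.1
      have hGb : G b = 0 := by
        apply hG0
        intro hmem
        have h1 : Mx ≤ max Mx ε := le_max_left _ _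
        have := hmem.2
        simp only [hbdef] at this
        linarith
      have hGa : G (ε / 2) = 0 := by
        apply hG0
        intro hmem
        linarith [hmem.1]
      rw [e1, ← e2, e3, hGb, hGa]
      ring
    -- integrability of fS, G', fR, fP
    have hfSint : IntegrableOn fS (Set.Ioi 0) := by
      apply aux_integrableOn (M := Mx) hε
      · apply ContinuousOn.mul _ hWc
        apply ContinuousOn.pow
        apply hv'cont.continuousOn.add
        apply ContinuousOn.mul _ hvcont.continuousOn
        apply ContinuousOn.sub
        · exact (continuousOn_const.mul hXc).add (continuous_const.mul continuous_id).continuousOn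
        · exact continuousOn_const.div continuous_id.continuousOn hrne
      · intro r hr; simp [hfSdef, hv0 r hr, hv'0 r hr]
    have hG'int : IntegrableOn G' (Set.Ioi 0) := by
      apply aux_integrableOn (M := Mx) hε hG'c
      intro r hr; exact hG'0 r hr
    have hfRint : IntegrableOn fR (Set.Ioi 0) := by
      apply aux_integrableOn (M := Mx) hε
      · apply ContinuousOn.mul _ ((hvcont.pow 2).continuousOn.mul hWc)
        apply ContinuousOn.add
        apply ContinuousOn.add
        apply ContinuousOn.add
        apply ContinuousOn.add
        · exact continuousOn_const.sub (continuousOn_const.mul (continuous_pow 2).continuousOn)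
        · exact continuousOn_const.div (Real.continuous_sinh.pow 2).continuousOn hs2ne
        · exact continuousOn_const.mul
            (((continuous_id.continuousOn.mul hXc).sub continuousOn_const).div
              (continuous_pow 2).continuousOn hr2ne)
        · exact (((continuousOn_const.mul hXc).sub
            (continuousOn_const.div continuous_id.continuousOn hrne)).pow 2)
        · exact continuousOn_const.div
            ((continuous_const.mul (Real.continuous_sinh.pow 2)).continuousOn)
            (fun r hr => mul_ne_zero two_ne_zero (hs2ne r hr))
      · intro r hr; simp [hfRdef, hv0 r hr]
    have hfPint : IntegrableOn fP (Set.Ioi 0) := by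
      exact (((hf1int.const_mul _).add (hf2int.const_mul _)).add
        (hf3int.const_mul _)).add (hf4int.const_mul _)
    -- the pointwise identity
    have hident : Set.EqOn fA (fun r => fS r + (G' r + fR r)) (Set.Ioi 0) := by
      intro r hr
      have hr0 : (0:ℝ) < r := hr
      have hs0 : Real.sinh r ≠ 0 := hsne r hr
      have hr0' : r ≠ 0 := ne_of_gt hr0
      have hc2 : Real.cosh r ^ 2 = Real.sinh r ^ 2 + 1 := Real.cosh_sq r
      have hlamv : lam = (((N : ℝ) - 1) ^ 2 - γ ^ 2) / 4 := by linarith [hγ2]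
      simp only [hfAdef, hfSdef, hG'def, hfRdef, hΦdef]
      exact aux_identity ((N : ℝ)) γ h t lam r (Real.sinh r) (Real.cosh r)
        (Real.sinh r ^ ((N : ℝ) - 1)) (v r) (deriv v r) hs0 hr0' hh hlamv hc2
    -- putting the integral identity together
    have hIAeq : ∫ r in Set.Ioi (0:ℝ), fA r
        = (∫ r in Set.Ioi (0:ℝ), fS r) + ((∫ r in Set.Ioi (0:ℝ), G' r)
            + ∫ r in Set.Ioi (0:ℝ), fR r) := by
      have hGR : IntegrableOn (fun x => G' x + fR x) (Set.Ioi 0) := hG'int.add hfRint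
      rw [setIntegral_congr_fun measurableSet_Ioi hident,
        integral_add hfSint hGR, integral_add hG'int hfRint]
    have hfS0 : 0 ≤ ∫ r in Set.Ioi (0:ℝ), fS r := by
      apply setIntegral_nonneg measurableSet_Ioi
      intro r hr
      exact mul_nonneg (sq_nonneg _) (hW0 r hr)
    -- comparison of fP and fR
    have hmono : ∫ r in Set.Ioi (0:ℝ), fP r ≤ ∫ r in Set.Ioi (0:ℝ), fR r := by
      apply setIntegral_mono_on hfPint hfRint measurableSet_Ioi
      intro r hr
      have hr0 : (0:ℝ) < r := hr
      have hs0 : (0:ℝ) < Real.sinh r := Real.sinh_pos_iff.mpr hr0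
      have hdiff : fR r - fP r = (t + (γ / 2 * (Real.cosh r / Real.sinh r) - h / r) ^ 2
          + γ / (2 * Real.sinh r ^ 2)) * ((v r) ^ 2 * Real.sinh r ^ ((N : ℝ) - 1)) := by
        simp only [hfRdef, hfPdef, hf1def, hf2def, hf3def, hf4def]
        ring
      have hnn : 0 ≤ (t + (γ / 2 * (Real.cosh r / Real.sinh r) - h / r) ^ 2
          + γ / (2 * Real.sinh r ^ 2)) * ((v r) ^ 2 * Real.sinh r ^ ((N : ℝ) - 1)) := by
        apply mul_nonneg
        · have h1 : 0 ≤ γ / (2 * Real.sinh r ^ 2) :=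
            div_nonneg hγ0 (by positivity)
          nlinarith [sq_nonneg (γ / 2 * (Real.cosh r / Real.sinh r) - h / r)]
        · exact mul_nonneg (sq_nonneg _) (hW0 r hr)
      rw [← hdiff] at hnn
      linarith
    -- evaluating the integral of fP
    have hfPeq : ∫ r in Set.Ioi (0:ℝ), fP r
        = 2 * h * t * (∫ r in Set.Ioi (0:ℝ), f1 r) + (-(t ^ 2)) * (∫ r in Set.Ioi (0:ℝ), f2 r)
          + (((N : ℝ) / 2) ^ 2 - h ^ 2) * (∫ r in Set.Ioi (0:ℝ), f3 r)
          + γ * h * (∫ r in Set.Ioi (0:ℝ), f4 r) := by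
      have h12 : IntegrableOn (fun x => 2 * h * t * f1 x + (-(t ^ 2)) * f2 x) (Set.Ioi 0) :=
        (hf1int.const_mul (2 * h * t)).add (hf2int.const_mul (-(t ^ 2)))
      have h123 : IntegrableOn (fun x => 2 * h * t * f1 x + (-(t ^ 2)) * f2 x
          + (((N : ℝ) / 2) ^ 2 - h ^ 2) * f3 x) (Set.Ioi 0) :=
        h12.add (hf3int.const_mul (((N : ℝ) / 2) ^ 2 - h ^ 2))
      simp only [hfPdef]
      rw [integral_add h123 (hf4int.const_mul (γ * h)),
        integral_add h12 (hf3int.const_mul (((N : ℝ) / 2) ^ 2 - h ^ 2)),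
        integral_add (hf1int.const_mul (2 * h * t)) (hf2int.const_mul (-(t ^ 2))),
        integral_const_mul, integral_const_mul, integral_const_mul, integral_const_mul]
    linarith [hmono, hfS0, hIAeq, hfPeq, hintG']
  -- endgame
  rcases eq_or_lt_of_le hIB0 with hB0 | hBpos
  · -- degenerate case: the weighted integral B vanishes
    have hC0 : (∫ r in Set.Ioi (0:ℝ), f1 r) = 0 := by
      have hle : ∫ r in Set.Ioi (0:ℝ), f1 r ≤ ∫ r in Set.Ioi (0:ℝ), (ε ^ 2)⁻¹ * f2 r := by
        apply setIntegral_mono_on hf1int (hf2int.const_mul _) measurableSet_Ioi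
        intro r hr
        by_cases hvr : v r = 0
        · simp [hf1def, hf2def, hvr]
        · have hrK : r ∈ Set.Icc ε Mx := by
            by_contra hK
            exact hvr (hv0 r hK)
          have hεr : ε ≤ r := hrK.1
          simp only [hf1def, hf2def]
          rw [← mul_assoc]
          apply mul_le_mul_of_nonneg_right _ (hW0 r hr)
          have h1 : ε ^ 2 ≤ r ^ 2 := by nlinarith
          have h2 : (0:ℝ) < ε ^ 2 := by positivity
          rw [inv_mul_eq_div, le_div_iff₀ h2]
          nlinarith [sq_nonneg (v r)]
      rw [integral_const_mul, ← hB0, mul_zero] at hle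
      linarith
    rw [← hB0, hC0]
    simp
  · -- main case: B > 0
    set IB := ∫ r in Set.Ioi (0:ℝ), f2 r with hIBdef
    set IC := ∫ r in Set.Ioi (0:ℝ), f1 r with hICdef
    have hkey := key (h * IC / IB) (by positivity)
    set t := h * IC / IB with htdef
    have htB : t * IB = h * IC := by
      rw [htdef]
      field_simp
    have hmul : (2 * h * t * IC - t ^ 2 * IB
        + (((N : ℝ) / 2) ^ 2 - h ^ 2) * (∫ r in Set.Ioi (0:ℝ), f3 r)
        + γ * h * (∫ r in Set.Ioi (0:ℝ), f4 r)) * IB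
        = h ^ 2 * IC ^ 2 + IB * ((((N : ℝ) / 2) ^ 2 - h ^ 2) * (∫ r in Set.Ioi (0:ℝ), f3 r)
            + γ * h * (∫ r in Set.Ioi (0:ℝ), f4 r)) := by
      have ht2 : t ^ 2 * IB * IB = h ^ 2 * IC ^ 2 := by
        have : t ^ 2 * IB * IB = (t * IB) * (t * IB) := by ring
        rw [this, htB]; ring
      nlinarith [htB, ht2]
    calc h ^ 2 * IC ^ 2 + IB * ((((N : ℝ) / 2) ^ 2 - h ^ 2) * (∫ r in Set.Ioi (0:ℝ), f3 r)
            + γ * h * (∫ r in Set.Ioi (0:ℝ), f4 r))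
        = (2 * h * t * IC - t ^ 2 * IB
          + (((N : ℝ) / 2) ^ 2 - h ^ 2) * (∫ r in Set.Ioi (0:ℝ), f3 r)
          + γ * h * (∫ r in Set.Ioi (0:ℝ), f4 r)) * IB := hmul.symm
      _ ≤ (∫ r in Set.Ioi (0:ℝ), fA r) * IB := by
          apply mul_le_mul_of_nonneg_right hkey (le_of_lt hBpos)
end

section
/- Let N ≥ 2 be an integer, let V and W be positive C¹ functions on (0,∞), and let f be a positive C² function on (0,∞) satisfying (r^{N−1}·V(r)·f'(r))' + r^{N−1}·W(r)·f(r) = 0 for all r > 0. Define W̃(r) = W(r) + (N−1)·(V(r)/sinh² r − V'(r)·cosh r/ sinh r) − (N−1)·V(r)·(f'(r)/f(r))·(coth r − 1/r), and assume W̃(r) > 0 for all r > 0. Then for every test function u, (∫₀^∞ V(r)·(u''(r) + (N−1)·coth(r)·u'(r))²·(sinh r)^{N−1} dr) · (∫₀^∞ (u'(r)²/W̃(r))·(sinh r)^{N−1} dr) ≥ (∫₀^∞ u'(r)²·(sinh r)^{N−1} dr)². -/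
open Real MeasureTheory

set_option maxHeartbeats 1600000 in
/-- **Abstract Heisenberg-Pauli-Weyl uncertainty principle via Bessel pairs,
radial form** (Theorem 3.5 of Berchio-Ganguly-Roychowdhury). -/
theorem stmt_10 (N : ℕ) (hN : 2 ≤ N)
    (V W f Wt : ℝ → ℝ)
    (hVpos : ∀ r ∈ Set.Ioi (0 : ℝ), 0 < V r) (hWpos : ∀ r ∈ Set.Ioi (0 : ℝ), 0 < W r)
    (hVC : ContDiffOn ℝ 1 V (Set.Ioi 0)) (hWC : ContDiffOn ℝ 1 W (Set.Ioi 0))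
    (hfpos : ∀ r ∈ Set.Ioi (0 : ℝ), 0 < f r) (hfC : ContDiffOn ℝ 2 f (Set.Ioi 0))
    (hODE : ∀ r ∈ Set.Ioi (0 : ℝ),
      deriv (fun s => s ^ (N - 1) * V s * deriv f s) r + r ^ (N - 1) * W r * f r = 0)
    (hWt : ∀ r ∈ Set.Ioi (0 : ℝ), Wt r
      = W r + ((N : ℝ) - 1) * (V r / Real.sinh r ^ 2 - deriv V r * Real.cosh r / Real.sinh r)
          - ((N : ℝ) - 1) * V r * (deriv f r / f r) * (Real.cosh r / Real.sinh r - 1 / r))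
    (hWtpos : ∀ r ∈ Set.Ioi (0 : ℝ), 0 < Wt r)
    (u : ℝ → ℝ) (hu : ContDiff ℝ (⊤ : ℕ∞) u) (hcs : HasCompactSupport u)
    (hsupp : tsupport u ⊆ Set.Ioi 0) :
    (∫ r in Set.Ioi (0 : ℝ),
        V r * (deriv (deriv u) r
          + ((N : ℝ) - 1) * (Real.cosh r / Real.sinh r) * deriv u r) ^ 2
          * Real.sinh r ^ ((N : ℝ) - 1))
      * (∫ r in Set.Ioi (0 : ℝ), (deriv u r) ^ 2 / Wt r * Real.sinh r ^ ((N : ℝ) - 1))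
    ≥ (∫ r in Set.Ioi (0 : ℝ), (deriv u r) ^ 2 * Real.sinh r ^ ((N : ℝ) - 1)) ^ 2 := by
  have hN2 : (2:ℝ) ≤ (N:ℝ) := by exact_mod_cast hN
  have hN1 : (1:ℝ) ≤ (N:ℝ) - 1 := by linarith
  -- choose an interval [a,b] ⊂ (0,∞) containing the support
  obtain ⟨a, b, ha, hab, hK⟩ : ∃ a b : ℝ, 0 < a ∧ a < b ∧ tsupport u ⊆ Set.Ioo a b := by
    rcases (tsupport u).eq_empty_or_nonempty with h | h
    · exact ⟨1, 2, one_pos, one_lt_two, by simp [h]⟩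
    · obtain ⟨x, hxK, hxmin⟩ := hcs.exists_isMinOn h continuousOn_id
      obtain ⟨y, hyK, hymax⟩ := hcs.exists_isMaxOn h continuousOn_id
      have hx0 : 0 < x := hsupp hxK
      refine ⟨x/2, y+1, by linarith, ?_, ?_⟩
      · have : x ≤ y := hxmin hyK
        linarith
      · intro z hz
        have h1 : x ≤ z := hxmin hz
        have h2 : z ≤ y := hymax hz
        constructor <;> [linarith; linarith]
  have hIab : Set.Icc a b ⊆ Set.Ioi (0:ℝ) := fun x hx => lt_of_lt_of_le ha hx.1
  have hIab' : Set.Ioc a b ⊆ Set.Ioi (0:ℝ) := fun x hx => lt_trans ha hx.1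
  -- vanishing of derivatives of u outside (a,b)
  have hsub1 : tsupport (deriv u) ⊆ tsupport u :=
    closure_minimal support_deriv_subset (isClosed_tsupport u)
  have hvz : ∀ r, r ∉ Set.Ioo a b → deriv u r = 0 := by
    intro r hr
    by_contra h
    exact hr (hK (hsub1 (subset_closure (Function.mem_support.mpr h))))
  have hv'z : ∀ r, r ∉ Set.Ioo a b → deriv (deriv u) r = 0 := by
    intro r hr
    by_contra h
    exact hr (hK (hsub1 (support_deriv_subset (Function.mem_support.mpr h))))
  -- smoothness of u derivatives
  have hu1 : ContDiff ℝ (↑(⊤:ℕ∞)) (deriv u) := by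
    have := (hu.of_le (by simp) : ContDiff ℝ (↑(⊤:ℕ∞)) u).iterate_deriv 1
    simpa using this
  have cu1 : Continuous (deriv u) := hu1.continuous
  have cu2 : Continuous (deriv (deriv u)) := hu1.continuous_deriv (by exact_mod_cast le_top)
  have hdu : ∀ r : ℝ, HasDerivAt (deriv u) (deriv (deriv u) r) r := fun r =>
    ((hu1.differentiable (by simp)) r).hasDerivAt
  -- reduction of the three integrals to interval integrals
  have red : ∀ g : ℝ → ℝ, (∀ r ∈ Set.Ioi (0:ℝ) \ Set.Ioc a b, g r = 0) →
      ∫ r in Set.Ioi (0:ℝ), g r = ∫ r in a..b, g r := by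
    intro g hg
    rw [intervalIntegral.integral_of_le hab.le]
    exact setIntegral_eq_of_subset_of_forall_diff_eq_zero measurableSet_Ioi hIab' hg
  have hnotIoo : ∀ r ∈ Set.Ioi (0:ℝ) \ Set.Ioc a b, r ∉ Set.Ioo a b := by
    intro r hr hmem
    exact hr.2 (Set.Ioo_subset_Ioc_self hmem)
  have e1 : (∫ r in Set.Ioi (0:ℝ),
        V r * (deriv (deriv u) r
          + ((N : ℝ) - 1) * (Real.cosh r / Real.sinh r) * deriv u r) ^ 2
          * Real.sinh r ^ ((N : ℝ) - 1))
      = ∫ r in a..b, V r * (deriv (deriv u) r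
          + ((N : ℝ) - 1) * (Real.cosh r / Real.sinh r) * deriv u r) ^ 2
          * Real.sinh r ^ ((N : ℝ) - 1) := by
    refine red _ (fun r hr => ?_)
    rw [hvz r (hnotIoo r hr), hv'z r (hnotIoo r hr)]
    ring
  have e2 : (∫ r in Set.Ioi (0:ℝ), (deriv u r) ^ 2 / Wt r * Real.sinh r ^ ((N : ℝ) - 1))
      = ∫ r in a..b, (deriv u r) ^ 2 / Wt r * Real.sinh r ^ ((N : ℝ) - 1) := by
    refine red _ (fun r hr => ?_)
    rw [hvz r (hnotIoo r hr)]
    ring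
  have e3 : (∫ r in Set.Ioi (0:ℝ), (deriv u r) ^ 2 * Real.sinh r ^ ((N : ℝ) - 1))
      = ∫ r in a..b, (deriv u r) ^ 2 * Real.sinh r ^ ((N : ℝ) - 1) := by
    refine red _ (fun r hr => ?_)
    rw [hvz r (hnotIoo r hr)]
    ring
  rw [e1, e2, e3]
  -- basic positivity facts on (0,∞)
  have hsinh : ∀ r ∈ Set.Ioi (0:ℝ), 0 < Real.sinh r := fun r hr =>
    Real.sinh_pos_iff.mpr hr
  -- continuity facts on Icc a b
  have cV : ContinuousOn V (Set.Icc a b) := hVC.continuousOn.mono hIab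
  have cV' : ContinuousOn (deriv V) (Set.Icc a b) :=
    ((hVC.deriv_of_isOpen (m := 0) isOpen_Ioi (by norm_num)).continuousOn).mono hIab
  have cW : ContinuousOn W (Set.Icc a b) := hWC.continuousOn.mono hIab
  have cf : ContinuousOn f (Set.Icc a b) := hfC.continuousOn.mono hIab
  have hfC1 : ContDiffOn ℝ 1 (deriv f) (Set.Ioi 0) :=
    hfC.deriv_of_isOpen (m := 1) isOpen_Ioi (by norm_num)
  have cf' : ContinuousOn (deriv f) (Set.Icc a b) := hfC1.continuousOn.mono hIab
  have csinh : ContinuousOn Real.sinh (Set.Icc a b) := Real.continuous_sinh.continuousOn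
  have ccosh : ContinuousOn Real.cosh (Set.Icc a b) := Real.continuous_cosh.continuousOn
  have hsne : ∀ x ∈ Set.Icc a b, Real.sinh x ≠ 0 := fun x hx => (hsinh x (hIab hx)).ne'
  have hfne : ∀ x ∈ Set.Icc a b, f x ≠ 0 := fun x hx => (hfpos x (hIab hx)).ne'
  have hrne : ∀ x ∈ Set.Icc a b, x ≠ 0 := fun x hx => (hIab hx).out.ne'
  have crho : ContinuousOn (fun r => Real.sinh r ^ ((N:ℝ)-1)) (Set.Icc a b) :=
    csinh.rpow_const (fun x hx => Or.inl (hsne x hx))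
  have cc : ContinuousOn (fun r => Real.cosh r / Real.sinh r) (Set.Icc a b) :=
    ccosh.div csinh hsne
  -- Wt agrees with a continuous positive function on Icc a b
  have cWt : ContinuousOn Wt (Set.Icc a b) := by
    have : ContinuousOn (fun r => W r + ((N : ℝ) - 1) * (V r / Real.sinh r ^ 2
        - deriv V r * Real.cosh r / Real.sinh r)
        - ((N : ℝ) - 1) * V r * (deriv f r / f r)
          * (Real.cosh r / Real.sinh r - 1 / r)) (Set.Icc a b) := by
      apply ContinuousOn.sub
      · apply cW.add
        apply ContinuousOn.mul continuousOn_const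
        exact (cV.div (csinh.pow 2) (fun x hx => pow_ne_zero 2 (hsne x hx))).sub
          (((cV'.mul ccosh)).div csinh hsne)
      · exact (((continuousOn_const.mul cV).mul (cf'.div cf hfne)).mul
          (cc.sub (continuousOn_const.div continuousOn_id hrne)))
    exact this.congr (fun x hx => hWt x (hIab hx))
  -- continuity of the integrands
  have cg1 : ContinuousOn (fun r => V r * (deriv (deriv u) r
      + ((N : ℝ) - 1) * (Real.cosh r / Real.sinh r) * deriv u r) ^ 2
      * Real.sinh r ^ ((N : ℝ) - 1)) (Set.Icc a b) := by
    exact (cV.mul (((cu2.continuousOn.add ((continuousOn_const.mul cc).mul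
      cu1.continuousOn))).pow 2)).mul crho
  have cg3 : ContinuousOn (fun r => (deriv u r) ^ 2 * Real.sinh r ^ ((N : ℝ) - 1))
      (Set.Icc a b) := ((cu1.continuousOn).pow 2).mul crho
  have cg2 : ContinuousOn (fun r => (deriv u r) ^ 2 / Wt r * Real.sinh r ^ ((N : ℝ) - 1))
      (Set.Icc a b) := by
    exact (((cu1.continuousOn).pow 2).div cWt
      (fun x hx => (hWtpos x (hIab hx)).ne')).mul crho
  have cgA : ContinuousOn (fun r => Wt r * (deriv u r) ^ 2 * Real.sinh r ^ ((N : ℝ) - 1))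
      (Set.Icc a b) := (cWt.mul ((cu1.continuousOn).pow 2)).mul crho
  have cgR : ContinuousOn (fun r => V r * (deriv (deriv u) r
      - deriv u r * deriv f r / f r) ^ 2 * Real.sinh r ^ ((N : ℝ) - 1)) (Set.Icc a b) := by
    exact (cV.mul ((cu2.continuousOn.sub (((cu1.continuousOn).mul cf').div cf hfne)).pow 2)).mul crho
  have huIcc : Set.uIcc a b = Set.Icc a b := Set.uIcc_of_le hab.le
  -- interval integrability
  have ig1 := (cg1.mono (by rw [huIcc])).intervalIntegrable (μ := volume)
  have ig2 := (cg2.mono (by rw [huIcc])).intervalIntegrable (μ := volume)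
  have ig3 := (cg3.mono (by rw [huIcc])).intervalIntegrable (μ := volume)
  have igA := (cgA.mono (by rw [huIcc])).intervalIntegrable (μ := volume)
  have igR := (cgR.mono (by rw [huIcc])).intervalIntegrable (μ := volume)
  -- the key differential identity
  set F : ℝ → ℝ := fun r => ((N:ℝ)-1) * V r * (Real.cosh r / Real.sinh r)
      * Real.sinh r ^ ((N:ℝ)-1) * deriv u r ^ 2
      + V r * deriv f r * Real.sinh r ^ ((N:ℝ)-1) * deriv u r ^ 2 / f r with hF
  have key : ∀ r ∈ Set.Icc a b, HasDerivAt F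
      (V r * (deriv (deriv u) r
        + ((N : ℝ) - 1) * (Real.cosh r / Real.sinh r) * deriv u r) ^ 2
        * Real.sinh r ^ ((N : ℝ) - 1)
      - Wt r * (deriv u r) ^ 2 * Real.sinh r ^ ((N : ℝ) - 1)
      - V r * (deriv (deriv u) r - deriv u r * deriv f r / f r) ^ 2
        * Real.sinh r ^ ((N : ℝ) - 1)) r := by
    intro r hrab
    have hr : r ∈ Set.Ioi (0:ℝ) := hIab hrab
    have hr0 : 0 < r := hr
    have hs : 0 < Real.sinh r := hsinh r hr
    have hfr : f r ≠ 0 := (hfpos r hr).ne'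
    have hVr : V r ≠ 0 := (hVpos r hr).ne'
    have hmem : Set.Ioi (0:ℝ) ∈ nhds r := isOpen_Ioi.mem_nhds hr
    have hVd : HasDerivAt V (deriv V r) r :=
      ((hVC.differentiableOn (by norm_num)).differentiableAt hmem).hasDerivAt
    have hfd : HasDerivAt f (deriv f r) r :=
      ((hfC.differentiableOn (by norm_num)).differentiableAt hmem).hasDerivAt
    have hf'd : HasDerivAt (deriv f) (deriv (deriv f) r) r :=
      ((hfC1.differentiableOn (by norm_num)).differentiableAt hmem).hasDerivAt
    -- second derivative of f from the ODE
    have hf2 : deriv (deriv f) r = (-W r * f r - deriv V r * deriv f r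
        - ((N:ℝ)-1) * V r * deriv f r / r) / V r := by
      have hpow : HasDerivAt (fun s : ℝ => s ^ (N-1)) ((N-1 : ℕ) * r ^ (N-1-1)) r :=
        hasDerivAt_pow (N-1) r
      have hprod : HasDerivAt (fun s => s ^ (N - 1) * V s * deriv f s)
          (((N-1:ℕ) * r ^ (N-1-1) * V r + r ^ (N-1) * deriv V r) * deriv f r
            + r ^ (N-1) * V r * deriv (deriv f) r) r := (hpow.mul hVd).mul hf'd
      have hoden := hODE r hr
      rw [hprod.deriv] at hoden
      have hcast : ((N-1:ℕ):ℝ) = (N:ℝ) - 1 := by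
        rw [Nat.cast_sub (by omega), Nat.cast_one]
      have hQ : (r:ℝ) ^ (N-1) = r ^ (N-1-1) * r := by
        rw [← pow_succ]
        congr 1
        omega
      have hX : (0:ℝ) < r ^ (N-1-1) := pow_pos hr0 _
      rw [hcast, hQ] at hoden
      have h2 : r ^ (N-1-1) * ((((N:ℝ)-1) * V r + r * deriv V r) * deriv f r
          + r * V r * deriv (deriv f) r + r * W r * f r) = 0 := by
        linear_combination hoden
      have h3 : (((N:ℝ)-1) * V r + r * deriv V r) * deriv f r
          + r * V r * deriv (deriv f) r + r * W r * f r = 0 :=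
        (mul_eq_zero.mp h2).resolve_left hX.ne'
      field_simp
      linear_combination h3
    -- derivative building blocks
    have hsinhd : HasDerivAt Real.sinh (Real.cosh r) r := Real.hasDerivAt_sinh r
    have hcoshd : HasDerivAt Real.cosh (Real.sinh r) r := Real.hasDerivAt_cosh r
    have hcd : HasDerivAt (fun s => Real.cosh s / Real.sinh s) (-(1 / Real.sinh r ^ 2)) r := by
      have h := hcoshd.div hsinhd hs.ne'
      refine HasDerivAt.congr_deriv (f := fun s => Real.cosh s / Real.sinh s) h ?_
      have hch := Real.cosh_sq r
      rw [show Real.sinh r * Real.sinh r - Real.cosh r * Real.cosh r = -1 by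
        linear_combination (-1:ℝ) * hch]
      ring
    have hrhod : HasDerivAt (fun s => Real.sinh s ^ ((N:ℝ)-1))
        (((N:ℝ)-1) * (Real.sinh r ^ ((N:ℝ)-1) / Real.sinh r) * Real.cosh r) r := by
      have h := hsinhd.rpow_const (p := (N:ℝ)-1) (Or.inl hs.ne')
      convert h using 1
      have he : Real.sinh r ^ ((N:ℝ)-1-1) = Real.sinh r ^ ((N:ℝ)-1) / Real.sinh r :=
        Real.rpow_sub_one hs.ne' _
      rw [he]
      ring
    have hv2 : HasDerivAt (fun s => deriv u s ^ 2)
        ((2:ℝ) * deriv u r ^ 1 * deriv (deriv u) r) r := (hdu r).pow 2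
    have hF1 := ((((hVd.const_mul ((N:ℝ)-1)).mul hcd).mul hrhod).mul hv2)
    have hF2 := (((hVd.mul hf'd).mul hrhod).mul hv2).div hfd hfr
    have hFd := hF1.add hF2
    refine HasDerivAt.congr_deriv (f := F) hFd ?_
    rw [hWt r hr, hf2]
    have hsne' : Real.sinh r ≠ 0 := hs.ne'
    simp only [Pi.mul_apply]
    field_simp
    ring
  -- integral of the derivative vanishes
  have hFa : F a = 0 := by
    have : deriv u a = 0 := hvz a (by simp)
    simp [hF, this]
  have hFb : F b = 0 := by
    have : deriv u b = 0 := hvz b (by simp)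
    simp [hF, this]
  have hkey : (∫ r in a..b, (V r * (deriv (deriv u) r
        + ((N : ℝ) - 1) * (Real.cosh r / Real.sinh r) * deriv u r) ^ 2
        * Real.sinh r ^ ((N : ℝ) - 1)
      - Wt r * (deriv u r) ^ 2 * Real.sinh r ^ ((N : ℝ) - 1)
      - V r * (deriv (deriv u) r - deriv u r * deriv f r / f r) ^ 2
        * Real.sinh r ^ ((N : ℝ) - 1))) = 0 := by
    rw [intervalIntegral.integral_eq_sub_of_hasDerivAt
      (fun x hx => key x (by rwa [huIcc] at hx)) ((ig1.sub igA).sub igR)]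
    rw [hFa, hFb]
    ring
  rw [intervalIntegral.integral_sub (ig1.sub igA) igR,
    intervalIntegral.integral_sub ig1 igA] at hkey
  -- notation for the integrals
  set I1 := ∫ r in a..b, V r * (deriv (deriv u) r
      + ((N : ℝ) - 1) * (Real.cosh r / Real.sinh r) * deriv u r) ^ 2
      * Real.sinh r ^ ((N : ℝ) - 1) with hI1
  set A := ∫ r in a..b, Wt r * (deriv u r) ^ 2 * Real.sinh r ^ ((N : ℝ) - 1) with hA
  set R := ∫ r in a..b, V r * (deriv (deriv u) r - deriv u r * deriv f r / f r) ^ 2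
      * Real.sinh r ^ ((N : ℝ) - 1) with hR
  set B := ∫ r in a..b, (deriv u r) ^ 2 * Real.sinh r ^ ((N : ℝ) - 1) with hB
  set C := ∫ r in a..b, (deriv u r) ^ 2 / Wt r * Real.sinh r ^ ((N : ℝ) - 1) with hC
  have hRpos : 0 ≤ R := by
    rw [hR]
    apply intervalIntegral.integral_nonneg hab.le
    intro x hx
    have := hVpos x (hIab hx)
    have := Real.rpow_nonneg (hsinh x (hIab hx)).le ((N:ℝ)-1)
    positivity
  have hApos : 0 ≤ A := by
    rw [hA]
    apply intervalIntegral.integral_nonneg hab.le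
    intro x hx
    have := hWtpos x (hIab hx)
    have := Real.rpow_nonneg (hsinh x (hIab hx)).le ((N:ℝ)-1)
    positivity
  have hCpos : 0 ≤ C := by
    rw [hC]
    apply intervalIntegral.integral_nonneg hab.le
    intro x hx
    have := hWtpos x (hIab hx)
    have := Real.rpow_nonneg (hsinh x (hIab hx)).le ((N:ℝ)-1)
    positivity
  have hI1A : A + R = I1 := by linarith
  -- Cauchy-Schwarz via the discriminant
  have hquad : ∀ t : ℝ, 0 ≤ A * (t * t) + (-2 * B) * t + C := by
    intro t
    have hsum : (∫ r in a..b, (Wt r * (deriv u r) ^ 2 * Real.sinh r ^ ((N : ℝ) - 1) * (t*t)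
        + (deriv u r) ^ 2 * Real.sinh r ^ ((N : ℝ) - 1) * (-2 * t)
        + (deriv u r) ^ 2 / Wt r * Real.sinh r ^ ((N : ℝ) - 1)))
        = A * (t*t) + (-2 * B) * t + C := by
      rw [intervalIntegral.integral_add (((igA.mul_const _).add (ig3.mul_const _))) ig2,
        intervalIntegral.integral_add (igA.mul_const _) (ig3.mul_const _),
        intervalIntegral.integral_mul_const, intervalIntegral.integral_mul_const]
      ring
    rw [← hsum]
    apply intervalIntegral.integral_nonneg hab.le
    intro x hx
    have hWtx := hWtpos x (hIab hx)
    have hrho := Real.rpow_nonneg (hsinh x (hIab hx)).le ((N:ℝ)-1)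
    have hk : Wt x * (deriv u x) ^ 2 * Real.sinh x ^ ((N : ℝ) - 1) * (t*t)
        + (deriv u x) ^ 2 * Real.sinh x ^ ((N : ℝ) - 1) * (-2 * t)
        + (deriv u x) ^ 2 / Wt x * Real.sinh x ^ ((N : ℝ) - 1)
        = (deriv u x) ^ 2 * Real.sinh x ^ ((N : ℝ) - 1) / Wt x * (Wt x * t - 1)^2 := by
      field_simp
      ring
    rw [hk]
    positivity
  have hdisc := discrim_le_zero hquad
  rw [discrim] at hdisc
  have hBAC : B ^ 2 ≤ A * C := by nlinarith
  -- conclude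
  have hI1ge : A ≤ I1 := by linarith
  calc I1 * C ≥ A * C := by nlinarith
    _ ≥ B ^ 2 := hBAC
end

section
/- Let N ≥ 2 be an integer and let λ ∈ [0, ((N−1)/2)²]. Set γ = √((N−1)² − 4λ), h = (γ+1)/2, Ψ_λ(r) = r^{−(N−2)/2}·(sinh r / r)^{−(N−1+γ)/2}, and W_λ(r) = λ + h²/r² + (((N−2)/2)² − h²)/ sinh² r + ( γ·h/r + (N−1)·Ψ_λ'(r)/Ψ_λ(r) )·(coth r − 1/r) for r > 0. Then Ψ_λ is positive and smooth on (0,∞) and satisfies (r^{N−1}·Ψ_λ'(r))' + r^{N−1}·W_λ(r)·Ψ_λ(r) = 0 for all r > 0; in other words, (r^{N−1}, r^{N−1}W_λ) is a Bessel pair on (0,∞) with positive solution Ψ_λ. -/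
open Real MeasureTheory

/-- **The family of Bessel pairs `(r^{N-1}, r^{N-1} W_λ)`** (Section 4 of
Berchio-Ganguly-Roychowdhury): `Ψ_λ` is a positive smooth solution on `(0,∞)` of
`(r^{N-1} Ψ_λ')' + r^{N-1} W_λ Ψ_λ = 0`. -/
theorem stmt_12 (N : ℕ) (hN : 2 ≤ N) (lam : ℝ)
    (hlam : lam ∈ Set.Icc (0 : ℝ) ((((N : ℝ) - 1) / 2) ^ 2))
    (γ h : ℝ) (hγ : γ = Real.sqrt (((N : ℝ) - 1) ^ 2 - 4 * lam))
    (hh : h = (γ + 1) / 2)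
    (Ψ W : ℝ → ℝ)
    (hΨ : ∀ r : ℝ, Ψ r
      = r ^ (-(((N : ℝ) - 2) / 2)) * (Real.sinh r / r) ^ (-(((N : ℝ) - 1 + γ) / 2)))
    (hW : ∀ r : ℝ, W r
      = lam + h ^ 2 / r ^ 2 + ((((N : ℝ) - 2) / 2) ^ 2 - h ^ 2) / Real.sinh r ^ 2
        + (γ * h / r + ((N : ℝ) - 1) * deriv Ψ r / Ψ r)
            * (Real.cosh r / Real.sinh r - 1 / r)) :
    (∀ r ∈ Set.Ioi (0 : ℝ), 0 < Ψ r) ∧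
    ContDiffOn ℝ (⊤ : ℕ∞) Ψ (Set.Ioi 0) ∧
    ∀ r ∈ Set.Ioi (0 : ℝ),
      deriv (fun s => s ^ (N - 1) * deriv Ψ s) r + r ^ (N - 1) * W r * Ψ r = 0 := by
  obtain ⟨M, rfl⟩ : ∃ M, N = M + 2 := ⟨N - 2, by omega⟩
  set b : ℝ := -(((M : ℝ) + 1 + γ) / 2) with hb
  have hγ2 : γ ^ 2 = ((M : ℝ) + 1) ^ 2 - 4 * lam := by
    rw [hγ, Real.sq_sqrt]
    · push_cast; ring
    · have h1 := hlam.2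
      push_cast at h1 ⊢
      nlinarith [h1]
  have hlam' : lam = (((M : ℝ) + 1) ^ 2 - γ ^ 2) / 4 := by linarith
  -- pointwise closed form on (0, ∞)
  have hform : ∀ r ∈ Set.Ioi (0 : ℝ), Ψ r = r ^ h * Real.sinh r ^ b := by
    intro r hr
    have hr0 : (0 : ℝ) < r := hr
    have hs : 0 < Real.sinh r := by rwa [Real.sinh_pos_iff]
    have e1 : -((((M + 2 : ℕ) : ℝ) - 2) / 2) = -((M : ℝ) / 2) := by push_cast; ring
    have e2 : -((((M + 2 : ℕ) : ℝ) - 1 + γ) / 2) = b := by rw [hb]; push_cast; ring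
    rw [hΨ, e1, e2, Real.div_rpow hs.le hr0.le,
      show h = -((M : ℝ) / 2) - b by rw [hh, hb]; ring, Real.rpow_sub hr0]
    field_simp
  -- positivity
  have hpos : ∀ r ∈ Set.Ioi (0 : ℝ), 0 < Ψ r := by
    intro r hr
    have hr0 : (0 : ℝ) < r := hr
    have hs : 0 < Real.sinh r := by rwa [Real.sinh_pos_iff]
    rw [hform r hr]
    exact mul_pos (Real.rpow_pos_of_pos hr0 h) (Real.rpow_pos_of_pos hs b)
  -- derivative formula
  have hD : ∀ r ∈ Set.Ioi (0 : ℝ),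
      HasDerivAt Ψ (Ψ r * (h / r + b * (Real.cosh r / Real.sinh r))) r := by
    intro r hr
    have hr0 : (0 : ℝ) < r := hr
    have hs : 0 < Real.sinh r := by rwa [Real.sinh_pos_iff]
    have hF : HasDerivAt (fun x : ℝ => x ^ h * Real.sinh x ^ b)
        (h * r ^ (h - 1) * Real.sinh r ^ b
          + r ^ h * (Real.cosh r * b * Real.sinh r ^ (b - 1))) r :=
      (Real.hasDerivAt_rpow_const (Or.inl hr0.ne')).mul
        ((Real.hasDerivAt_sinh r).rpow_const (Or.inl hs.ne'))
    have heq : Ψ =ᶠ[nhds r] fun x : ℝ => x ^ h * Real.sinh x ^ b := by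
      filter_upwards [Ioi_mem_nhds hr0] with x hx using hform x hx
    have hF' : HasDerivAt Ψ (h * r ^ (h - 1) * Real.sinh r ^ b
          + r ^ h * (Real.cosh r * b * Real.sinh r ^ (b - 1))) r :=
      hF.congr_of_eventuallyEq heq
    convert hF' using 1
    rw [hform r hr, Real.rpow_sub_one hr0.ne', Real.rpow_sub_one hs.ne']
    field_simp
  have hderiv : ∀ x ∈ Set.Ioi (0 : ℝ),
      deriv Ψ x = Ψ x * (h / x + b * (Real.cosh x / Real.sinh x)) :=
    fun x hx => (hD x hx).deriv
  refine ⟨hpos, ?_, ?_⟩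
  · -- smoothness
    intro r hr
    have hr0 : (0 : ℝ) < r := hr
    have hs : 0 < Real.sinh r := by rwa [Real.sinh_pos_iff]
    apply ContDiffAt.contDiffWithinAt
    have h1 : ContDiffAt ℝ (⊤ : ℕ∞) (fun x : ℝ => x ^ (-((((M + 2 : ℕ) : ℝ) - 2) / 2))) r :=
      Real.contDiffAt_rpow_const_of_ne hr0.ne'
    have h2 : ContDiffAt ℝ (⊤ : ℕ∞)
        (fun x : ℝ => (Real.sinh x / x) ^ (-((((M + 2 : ℕ) : ℝ) - 1 + γ) / 2))) r := by
      apply ContDiffAt.rpow_const_of_ne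
      · exact Real.contDiff_sinh.contDiffAt.div contDiffAt_id hr0.ne'
      · exact (div_pos hs hr0).ne'
    exact ((h1.mul h2).congr_of_eventuallyEq
      (Filter.Eventually.of_forall fun x => hΨ x))
  · -- the ODE
    intro r hr
    have hr0 : (0 : ℝ) < r := hr
    have hs : 0 < Real.sinh r := by rwa [Real.sinh_pos_iff]
    have hP : 0 < Ψ r := hpos r hr
    have houter : HasDerivAt
        (fun x : ℝ => x ^ (M + 1) * (Ψ x * (h / x + b * (Real.cosh x / Real.sinh x))))
        ((↑(M + 1) * r ^ M) * (Ψ r * (h / r + b * (Real.cosh r / Real.sinh r)))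
          + r ^ (M + 1) *
            ((Ψ r * (h / r + b * (Real.cosh r / Real.sinh r)))
                * (h / r + b * (Real.cosh r / Real.sinh r))
              + Ψ r * ((0 * r - h * 1) / r ^ 2
                  + b * ((Real.sinh r * Real.sinh r - Real.cosh r * Real.cosh r)
                      / Real.sinh r ^ 2)))) r :=
      (hasDerivAt_pow (M + 1) r).mul ((hD r hr).mul
        (((hasDerivAt_const r h).div (hasDerivAt_id r) hr0.ne').add
          (((Real.hasDerivAt_cosh r).div (Real.hasDerivAt_sinh r) hs.ne').const_mul b)))
    have hEq : (fun s : ℝ => s ^ (M + 2 - 1) * deriv Ψ s) =ᶠ[nhds r]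
        (fun x : ℝ => x ^ (M + 1) * (Ψ x * (h / x + b * (Real.cosh x / Real.sinh x)))) := by
      filter_upwards [Ioi_mem_nhds hr0] with x hx
      rw [hderiv x hx]
      norm_num
    rw [hEq.deriv_eq, houter.deriv, hW r, hderiv r hr]
    rw [hlam', hh, hb]
    have hone : Real.sinh r ^ 2 + 1 - Real.cosh r ^ 2 = 0 := by
      have := Real.cosh_sq r; linarith
    have hzero : (0 : ℝ) = r ^ (M + 1) * Ψ r * ((((M : ℝ) + 1) ^ 2 - γ ^ 2) / 4)
        * ((Real.sinh r ^ 2 + 1 - Real.cosh r ^ 2) / Real.sinh r ^ 2) := by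
      rw [hone]; simp
    conv_rhs => rw [hzero]
    push_cast
    field_simp
    linear_combination
      (-(8 : ℝ) * (γ + 1 + (M : ℝ)) * r ^ 3 * r ^ M) * hone
end

section
/- Let N ≥ 2 be an integer and let λ ∈ [0, ((N−1)/2)²]. Set γ = √((N−1)² − 4λ) and h = (γ+1)/2. Then for every r > 0, W̃_λ(r) := λ + h²/r² + ((N/2)² − h²)/ sinh² r + (γ·h/r)·(coth r − 1/r) > 0. -/
/-!
Every term of `W̃_λ` is nonnegative and `h² / r²` is positive. The only terms needing an
argument are `((N/2)² - h²) / sinh² r`, nonnegative because `0 ≤ γ ≤ N - 1` gives `h ≤ N / 2`,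
and the last one, nonnegative because `coth r ≥ 1 / r`, i.e. `sinh r ≤ r cosh r`.
-/

open Real

namespace Real

/-- On `[0, r]` the derivative `cosh` of `sinh` is at most `cosh r` (mean value theorem). -/
theorem sinh_le_mul_cosh {r : ℝ} (hr : 0 ≤ r) : sinh r ≤ r * cosh r := by
  have hmvt := convex_Icc 0 r |>.image_sub_le_mul_sub_of_deriv_le
    continuous_sinh.continuousOn differentiable_sinh.differentiableOn
    (C := cosh r) (fun x hx => by
      rw [interior_Icc] at hx
      rw [deriv_sinh, cosh_le_cosh, abs_of_pos hx.1, abs_of_nonneg hr]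
      exact hx.2.le)
    0 (Set.left_mem_Icc.2 hr) r (Set.right_mem_Icc.2 hr) hr
  simpa [mul_comm] using hmvt

theorem one_div_le_cosh_div_sinh {r : ℝ} (hr : 0 < r) : 1 / r ≤ cosh r / sinh r := by
  rw [div_le_div_iff₀ hr (sinh_pos_iff.2 hr), one_mul, mul_comm]
  exact sinh_le_mul_cosh hr.le

end Real

theorem weight_pos_of_le {n lam γ h r : ℝ} (hlam : 0 ≤ lam) (hγ : 0 ≤ γ) (hh : 0 < h)
    (hhn : h ≤ n / 2) (hr : 0 < r) :
    0 < lam + h ^ 2 / r ^ 2 + ((n / 2) ^ 2 - h ^ 2) / sinh r ^ 2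
      + (γ * h / r) * (cosh r / sinh r - 1 / r) := by
  have hleading_term : 0 < h ^ 2 / r ^ 2 := by positivity
  have hsinh_term : 0 ≤ ((n / 2) ^ 2 - h ^ 2) / sinh r ^ 2 :=
    div_nonneg (sub_nonneg.2 (pow_le_pow_left₀ hh.le hhn 2)) (sq_nonneg _)
  have hcoth_term : 0 ≤ (γ * h / r) * (cosh r / sinh r - 1 / r) :=
    mul_nonneg (by positivity) (sub_nonneg.2 (one_div_le_cosh_div_sinh hr))
  linarith

/-- Positivity on `(0,∞)` of the effective weight `W̃_λ` arising from the Bessel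
pair `(r^{N-1}, r^{N-1} W_λ)` (Berchio-Ganguly-Roychowdhury). -/
theorem stmt_19 (N : ℕ) (hN : 2 ≤ N) (lam : ℝ)
    (hlam : lam ∈ Set.Icc (0 : ℝ) ((((N : ℝ) - 1) / 2) ^ 2))
    (γ h : ℝ) (hγ : γ = Real.sqrt (((N : ℝ) - 1) ^ 2 - 4 * lam))
    (hh : h = (γ + 1) / 2) :
    ∀ r ∈ Set.Ioi (0 : ℝ),
      0 < lam + h ^ 2 / r ^ 2 + (((N : ℝ) / 2) ^ 2 - h ^ 2) / Real.sinh r ^ 2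
        + (γ * h / r) * (Real.cosh r / Real.sinh r - 1 / r) := by
  intro r hr
  have hN1 : (0 : ℝ) ≤ N - 1 := by
    have : (2 : ℝ) ≤ N := by exact_mod_cast hN
    linarith
  have hγ0 : 0 ≤ γ := hγ ▸ sqrt_nonneg _
  have hγN : γ ≤ N - 1 :=
    hγ ▸ (sqrt_le_sqrt (by linarith [hlam.1])).trans_eq (sqrt_sq hN1)
  exact weight_pos_of_le hlam.1 hγ0 (by rw [hh]; linarith) (by rw [hh]; linarith) hr
end
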